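/- arXiv:2305.02964 — 17 statements merged into one kernel-verified Lean document; each statement's English description precedes it below -/
import Mathlib

section
/- Let p, q ≥ 1 and let B be the adjacency matrix of (K_{p,q},−), i.e. the block matrix [[0_p, −J_{p×q}],[−J_{q×p}, 0_q]] with J denoting all-ones blocks. For every real t with t ≠ 0 and t² ≠ pq, the matrix tI_{p+q} − B is invertible and the coronal of B at t equals χ_B(t) = ((p+q)t − 2pq)/(t² − pq). -/
open Matrix BigOperators

/-- The coronal of a matrix `B` at `t`: `jᵀ (tI − B)⁻¹ j`, where `j` is the all-ones vector. -/
noncomputable def coronal {V : Type*} [Fintype V] [DecidableEq V]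
    (B : Matrix V V ℝ) (t : ℝ) : ℝ :=
  dotProduct (fun _ => 1) (((t • (1 : Matrix V V ℝ) - B)⁻¹).mulVec fun _ => 1)

/-- The adjacency matrix of `(K_{p,q}, −)`, the all-negative complete bipartite signed graph:
the block matrix `[[0, −J], [−J, 0]]`. -/
def negKpq (p q : ℕ) : Matrix (Fin p ⊕ Fin q) (Fin p ⊕ Fin q) ℝ :=
  Matrix.fromBlocks 0 (Matrix.of fun _ _ => -1) (Matrix.of fun _ _ => -1) 0

/-!
Write `tI − B` blockwise as `[[tI, J], [J, tI]]`. Since a product of all-ones blocks is the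
inner size times an all-ones block, the inverse can be guessed in the form
`t⁻¹ I + (t (t² − pq))⁻¹ [[qJ, −tJ], [−tJ, pJ]]`, which proves invertibility. The system
`(tI − B) x = j` is solved by `x` constant on each side, with values `(t − q)/(t² − pq)` and
`(t − p)/(t² − pq)`, and the coronal is the sum of the entries of `x`.
-/

theorem Matrix.of_one_mul_of_one {l m n R : Type*} [Fintype m] [NonAssocSemiring R] :
    (of fun (_ : l) (_ : m) => (1 : R)) * (of fun (_ : m) (_ : n) => (1 : R)) =
      (Fintype.card m : R) • of fun _ _ => 1 := by
  ext i k
  simp [mul_apply]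

theorem smul_one_sub_negKpq (p q : ℕ) (t : ℝ) :
    t • 1 - negKpq p q = fromBlocks (t • 1) (of fun _ _ => 1) (of fun _ _ => 1) (t • 1) := by
  ext (i | i) (j | j) <;> simp [negKpq, one_apply]

section Resolvent

variable (m n : Type*) [Fintype m] [Fintype n] [DecidableEq m] [DecidableEq n]

noncomputable def resolventNegKpq (t : ℝ) : Matrix (m ⊕ n) (m ⊕ n) ℝ :=
  let a : ℝ := Fintype.card m
  let b : ℝ := Fintype.card n
  let c := (t * (t ^ 2 - a * b))⁻¹
  fromBlocks (t⁻¹ • 1 + (b * c) • of fun _ _ => 1) (-(t * c) • of fun _ _ => 1)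
    (-(t * c) • of fun _ _ => 1) (t⁻¹ • 1 + (a * c) • of fun _ _ => 1)

variable {m n}

theorem fromBlocks_mul_resolventNegKpq {t : ℝ} (ht : t ≠ 0)
    (hD : t ^ 2 ≠ Fintype.card m * Fintype.card n) :
    fromBlocks (t • 1) (of fun _ _ => 1) (of fun _ _ => 1) (t • 1) * resolventNegKpq m n t = 1 := by
  rw [resolventNegKpq, fromBlocks_multiply, ← fromBlocks_one]
  simp only [Matrix.mul_add, Matrix.mul_smul, Matrix.smul_mul, Matrix.one_mul, Matrix.mul_one,
    Matrix.of_one_mul_of_one, smul_smul, ← add_smul, inv_mul_cancel₀ ht, one_smul]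
  generalize (Fintype.card m : ℝ) = a at *
  generalize (Fintype.card n : ℝ) = b at *
  have hc : (t * (t ^ 2 - a * b))⁻¹ * (t ^ 2 - a * b) = t⁻¹ := by
    field_simp [sub_ne_zero.mpr hD]
  generalize (t * (t ^ 2 - a * b))⁻¹ = c at *
  congr 1
  · rw [add_assoc, ← add_smul, show b * c * t + -(t * c) * b = 0 by ring, zero_smul, add_zero]
  · rw [show -(t * c) * t + (t⁻¹ + a * c * b) = 0 by linear_combination -hc, zero_smul]
  · rw [show t⁻¹ + b * c * a + -(t * c) * t = 0 by linear_combination -hc, zero_smul]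
  · rw [add_left_comm, ← add_smul, show -(t * c) * a + a * c * t = 0 by ring, zero_smul, add_zero]

theorem fromBlocks_mulVec_sumElim_const (t α β : ℝ) :
    fromBlocks (t • 1 : Matrix m m ℝ) (of fun _ _ => 1) (of fun _ _ => 1) (t • 1 : Matrix n n ℝ) *ᵥ
        Sum.elim (fun _ : m => α) (fun _ : n => β) =
      Sum.elim (fun _ => t * α + Fintype.card n * β) (fun _ => Fintype.card m * α + t * β) := by
  ext (i | i) <;> simp [mulVec, dotProduct, one_apply, mul_comm]

end Resolvent

theorem coronal_eq_sum_of_mulVec_eq_one {V : Type*} [Fintype V] [DecidableEq V]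
    {B N : Matrix V V ℝ} {t : ℝ} (hN : (t • 1 - B) * N = 1) {x : V → ℝ}
    (hx : (t • 1 - B) *ᵥ x = 1) : coronal B t = ∑ i, x i := by
  calc coronal B t = 1 ⬝ᵥ (N *ᵥ ((t • 1 - B) *ᵥ x)) := by
        rw [coronal, inv_eq_right_inv hN, hx]; rfl
    _ = ∑ i, x i := by rw [mulVec_mulVec, mul_eq_one_comm.mp hN, one_mulVec, one_dotProduct]

theorem coronal_negKpq_general {p q : ℕ} (t : ℝ)
    (ht : t ≠ 0) (ht2 : t ^ 2 ≠ (p : ℝ) * q) :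
    IsUnit (t • (1 : Matrix (Fin p ⊕ Fin q) (Fin p ⊕ Fin q) ℝ) - negKpq p q).det ∧
    coronal (negKpq p q) t = (((p : ℝ) + q) * t - 2 * p * q) / (t ^ 2 - p * q) := by
  have hD : t ^ 2 - p * q ≠ 0 := sub_ne_zero.mpr ht2
  have hinv : (t • 1 - negKpq p q) * resolventNegKpq (Fin p) (Fin q) t = 1 := by
    rw [smul_one_sub_negKpq, fromBlocks_mul_resolventNegKpq ht (by simpa using ht2)]
  refine ⟨isUnit_det_of_right_inverse hinv, ?_⟩
  have hx : (t • 1 - negKpq p q) *ᵥ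
      Sum.elim (fun _ => (t - q) / (t ^ 2 - p * q)) (fun _ => (t - p) / (t ^ 2 - p * q)) = 1 := by
    rw [smul_one_sub_negKpq, fromBlocks_mulVec_sumElim_const]
    ext (i | i) <;> simp only [Fintype.card_fin, Sum.elim_inl, Sum.elim_inr, Pi.one_apply] <;>
      rw [mul_div_assoc', mul_div_assoc', ← add_div, div_eq_one_iff_eq hD] <;> ring
  rw [coronal_eq_sum_of_mulVec_eq_one hinv hx, Fintype.sum_sum_type]
  simp only [Sum.elim_inl, Sum.elim_inr, Finset.sum_const, Finset.card_univ, Fintype.card_fin,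
    nsmul_eq_mul]
  rw [mul_div_assoc', mul_div_assoc', ← add_div]
  ring

/-- For `p, q ≥ 1` and real `t` with `t ≠ 0` and `t² ≠ pq`, the matrix `tI − A(K_{p,q},−)` is
invertible and the coronal of `A(K_{p,q},−)` at `t` equals `((p+q)t − 2pq)/(t² − pq)`. -/
theorem coronal_negKpq {p q : ℕ} (hp : 1 ≤ p) (hq : 1 ≤ q) (t : ℝ)
    (ht : t ≠ 0) (ht2 : t ^ 2 ≠ (p : ℝ) * q) :
    IsUnit (t • (1 : Matrix (Fin p ⊕ Fin q) (Fin p ⊕ Fin q) ℝ) - negKpq p q).det ∧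
    coronal (negKpq p q) t = (((p : ℝ) + q) * t - 2 * p * q) / (t ^ 2 - p * q) :=
  coronal_negKpq_general t ht ht2
end

section
/- Let p, q ≥ 1 and let B be the adjacency matrix of (K_{p,q},+), i.e. the block matrix [[0_p, J_{p×q}],[J_{q×p}, 0_q]] with J denoting all-ones blocks. For every real t with t ≠ 0 and t² ≠ pq, the matrix tI_{p+q} − B is invertible and the coronal of B at t equals χ_B(t) = ((p+q)t + 2pq)/(t² − pq). -/
open Matrix BigOperators

/-- The adjacency matrix of `(K_{p,q}, +)`, the all-positive complete bipartite signed graph: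
the block matrix `[[0, J], [J, 0]]`. -/
def posKpq (p q : ℕ) : Matrix (Fin p ⊕ Fin q) (Fin p ⊕ Fin q) ℝ :=
  Matrix.fromBlocks 0 (Matrix.of fun _ _ => 1) (Matrix.of fun _ _ => 1) 0

/-!
The equation `(tI − B) x = j` has the solution `x = ((t + q) j_p, (t + p) j_q) / (t² − pq)`,
so the coronal is `jᵀ x = (p (t + q) + q (t + p)) / (t² − pq)`. Invertibility of `tI − B`:
a kernel vector `x` has `t x = (β j_p, α j_q)` with `α, β` the sums of `x` over the two sides,
whence `tα = pβ`, `tβ = qα`, so `(t² − pq) α = 0` and everything vanishes.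
-/

theorem coronal_eq_sum_of_mulVec_eq {V : Type*} [Fintype V] [DecidableEq V]
    {B : Matrix V V ℝ} {t : ℝ} (hB : IsUnit (t • (1 : Matrix V V ℝ) - B).det) {x : V → ℝ}
    (hx : (t • (1 : Matrix V V ℝ) - B) *ᵥ x = 1) :
    coronal B t = ∑ v, x v := by
  have hinv : (t • (1 : Matrix V V ℝ) - B)⁻¹ *ᵥ 1 = x := by
    rw [← hx, mulVec_mulVec, nonsing_inv_mul _ hB, one_mulVec]
  exact (congrArg (1 ⬝ᵥ ·) hinv).trans (one_dotProduct x)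

section posKpq

variable {p q : ℕ} (t : ℝ) (x : Fin p ⊕ Fin q → ℝ)

theorem smul_one_sub_posKpq_mulVec_inl (i : Fin p) :
    ((t • 1 - posKpq p q) *ᵥ x) (.inl i) = t * x (.inl i) - ∑ j, x (.inr j) := by
  rw [sub_mulVec, smul_mulVec, one_mulVec]
  simp [posKpq, fromBlocks_mulVec, mulVec, dotProduct]

theorem smul_one_sub_posKpq_mulVec_inr (j : Fin q) :
    ((t • 1 - posKpq p q) *ᵥ x) (.inr j) = t * x (.inr j) - ∑ i, x (.inl i) := by
  rw [sub_mulVec, smul_mulVec, one_mulVec]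
  simp [posKpq, fromBlocks_mulVec, mulVec, dotProduct]

theorem isUnit_det_smul_one_sub_posKpq (ht : t ≠ 0) (ht2 : t ^ 2 ≠ (p : ℝ) * q) :
    IsUnit (t • (1 : Matrix (Fin p ⊕ Fin q) (Fin p ⊕ Fin q) ℝ) - posKpq p q).det := by
  refine isUnit_iff_ne_zero.mpr fun hdet => ?_
  obtain ⟨x, hx0, hx⟩ := exists_mulVec_eq_zero_iff.mpr hdet
  set α := ∑ i, x (.inl i)
  set β := ∑ j, x (.inr j)
  have hl (i : Fin p) : t * x (.inl i) = β :=
    sub_eq_zero.mp ((smul_one_sub_posKpq_mulVec_inl t x i).symm.trans (congrFun hx _))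
  have hr (j : Fin q) : t * x (.inr j) = α :=
    sub_eq_zero.mp ((smul_one_sub_posKpq_mulVec_inr t x j).symm.trans (congrFun hx _))
  have htα : t * α = p * β := by simp [α, Finset.mul_sum, hl]
  have htβ : t * β = q * α := by simp [β, Finset.mul_sum, hr]
  have hα : α = 0 := by
    have : (t ^ 2 - p * q) * α = 0 := by linear_combination t * htα + p * htβ
    exact (mul_eq_zero.mp this).resolve_left (sub_ne_zero.mpr ht2)
  have hβ : β = 0 := by simpa [hα, ht] using htβ
  refine hx0 (funext fun v => ?_)
  rcases v with i | j
  · simpa [hβ, ht] using hl i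
  · simpa [hα, ht] using hr j

theorem smul_one_sub_posKpq_mulVec_eq_one (ht2 : t ^ 2 ≠ (p : ℝ) * q) :
    (t • 1 - posKpq p q) *ᵥ
      Sum.elim (fun _ => (t + q) / (t ^ 2 - p * q)) (fun _ => (t + p) / (t ^ 2 - p * q)) = 1 := by
  have hs : t ^ 2 - (p : ℝ) * q ≠ 0 := sub_ne_zero.mpr ht2
  funext v
  rcases v with i | j <;>
  · simp only [smul_one_sub_posKpq_mulVec_inl, smul_one_sub_posKpq_mulVec_inr, Sum.elim_inl, Sum.elim_inr,
      Finset.sum_const, Finset.card_univ, Fintype.card_fin, nsmul_eq_mul, Pi.one_apply]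
    rw [← mul_div_assoc, ← mul_div_assoc, ← sub_div, div_eq_one_iff_eq hs]
    ring

end posKpq

theorem coronal_posKpq_general {p q : ℕ} (t : ℝ)
    (ht : t ≠ 0) (ht2 : t ^ 2 ≠ (p : ℝ) * q) :
    IsUnit (t • (1 : Matrix (Fin p ⊕ Fin q) (Fin p ⊕ Fin q) ℝ) - posKpq p q).det ∧
    coronal (posKpq p q) t = (((p : ℝ) + q) * t + 2 * p * q) / (t ^ 2 - p * q) := by
  have hunit := isUnit_det_smul_one_sub_posKpq t ht ht2
  refine ⟨hunit, ?_⟩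
  rw [coronal_eq_sum_of_mulVec_eq hunit (smul_one_sub_posKpq_mulVec_eq_one t ht2)]
  simp only [Fintype.sum_sum_type, Sum.elim_inl, Sum.elim_inr, Finset.sum_const,
    Finset.card_univ, Fintype.card_fin, nsmul_eq_mul]
  field_simp
  ring

/-- For `p, q ≥ 1` and real `t` with `t ≠ 0` and `t² ≠ pq`, the matrix `tI − A(K_{p,q},+)` is
invertible and the coronal of `A(K_{p,q},+)` at `t` equals `((p+q)t + 2pq)/(t² − pq)`. -/
theorem coronal_posKpq {p q : ℕ} (hp : 1 ≤ p) (hq : 1 ≤ q) (t : ℝ)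
    (ht : t ≠ 0) (ht2 : t ^ 2 ≠ (p : ℝ) * q) :
    IsUnit (t • (1 : Matrix (Fin p ⊕ Fin q) (Fin p ⊕ Fin q) ℝ) - posKpq p q).det ∧
    coronal (posKpq p q) t = (((p : ℝ) + q) * t + 2 * p * q) / (t ^ 2 - p * q) :=
  coronal_posKpq_general t ht ht2
end

section
/- Let S₁ and S₂ be signed graphs with adjacency matrices A₁ (n₁×n₁) and A₂ (n₂×n₂), and let A be the adjacency matrix of the s-neighbourhood corona S₁ ⋆ₛ S₂. For every real number t such that tI_{n₂} − A₂ is invertible, det(tI_{n₁(n₂+1)} − A) = det(tI_{n₂} − A₂)^{n₁} · det(tI_{n₁} − A₁ − χ_{A₂}(t)·A₁²), where χ_{A₂}(t) = j_{n₂}ᵀ(tI_{n₂} − A₂)⁻¹j_{n₂} is the coronal of A₂ at t. -/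
open Matrix BigOperators Kronecker

/-- A signed graph on vertex set `V` is represented by its adjacency matrix: a real symmetric
matrix with zero diagonal and all entries in `{-1, 0, 1}`. -/
def IsSignedAdj {V : Type*} (A : Matrix V V ℝ) : Prop :=
  A.IsHermitian ∧ (∀ i, A i i = 0) ∧ ∀ i j, A i j = -1 ∨ A i j = 0 ∨ A i j = 1

/-- The adjacency matrix of the s-neighbourhood corona `S₁ ⋆ₛ S₂`:
the block matrix `[[A₁, jᵀ ⊗ A₁], [(jᵀ ⊗ A₁)ᵀ, A₂ ⊗ I]]`, indexed by `Fin n₁ ⊕ (V × Fin n₁)`. -/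
def coronaAdj {n₁ : ℕ} {V : Type*} [DecidableEq V]
    (A₁ : Matrix (Fin n₁) (Fin n₁) ℝ) (A₂ : Matrix V V ℝ) :
    Matrix (Fin n₁ ⊕ V × Fin n₁) (Fin n₁ ⊕ V × Fin n₁) ℝ :=
  Matrix.fromBlocks A₁ (Matrix.of fun i p => A₁ i p.2) (Matrix.of fun p j => A₁ p.2 j)
    (A₂ ⊗ₖ (1 : Matrix (Fin n₁) (Fin n₁) ℝ))

/-!
Writing `tI − A` in blocks, its lower right block is `(tI − A₂) ⊗ I`, invertible with inverse
`(tI − A₂)⁻¹ ⊗ I`, so the Schur complement formula gives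
`det(tI − A) = det(tI − A₂)^{n₁} · det(tI − A₁ − (jᵀ ⊗ A₁)((tI − A₂)⁻¹ ⊗ I)(j ⊗ A₁))`.
The product in the Schur complement collapses to `(jᵀ (tI − A₂)⁻¹ j) · A₁²`, since
`(jᵀ ⊗ A₁)(M ⊗ I)(j ⊗ A₁) = (jᵀ M j) · A₁²` for every `M`.
-/

namespace Matrix

variable {l m n V R : Type*}

theorem smul_one_sub_fromBlocks [DecidableEq l] [DecidableEq m] [Ring R]
    (t : R) (A : Matrix l l R) (B : Matrix l m R) (C : Matrix m l R) (D : Matrix m m R) :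
    t • (1 : Matrix (l ⊕ m) (l ⊕ m) R) - fromBlocks A B C D
      = fromBlocks (t • 1 - A) (-B) (-C) (t • 1 - D) := by
  rw [← fromBlocks_one, fromBlocks_smul, sub_eq_add_neg, fromBlocks_neg, fromBlocks_add]
  simp [sub_eq_add_neg]

theorem smul_one_sub_kronecker_one [DecidableEq V] [DecidableEq m] [Ring R]
    (t : R) (A : Matrix V V R) :
    t • (1 : Matrix (V × m) (V × m) R) - A ⊗ₖ (1 : Matrix m m R) = (t • 1 - A) ⊗ₖ 1 := by
  ext ⟨i, p⟩ ⟨j, q⟩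
  simp only [sub_apply, smul_apply, kroneckerMap_apply, one_apply, Prod.mk.injEq, smul_eq_mul]
  split_ifs <;> simp_all

theorem det_fromBlocks_kronecker_one₂₂ [Fintype n] [Fintype m] [Fintype V] [DecidableEq n]
    [DecidableEq m] [DecidableEq V] [CommRing R] (A : Matrix n n R) (B : Matrix n (V × m) R)
    (C : Matrix (V × m) n R) (D : Matrix V V R) (hD : IsUnit D.det) :
    (fromBlocks A B C (D ⊗ₖ (1 : Matrix m m R))).det
      = D.det ^ Fintype.card m * (A - B * (D⁻¹ ⊗ₖ (1 : Matrix m m R)) * C).det := by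
  have hDk : IsUnit (D ⊗ₖ (1 : Matrix m m R)).det := by
    rw [det_kronecker, det_one, one_pow, mul_one]
    exact hD.pow _
  have := invertibleOfIsUnitDet _ hDk
  rw [det_fromBlocks₂₂, invOf_eq_nonsing_inv, inv_kronecker, inv_one, det_kronecker, det_one,
    one_pow, mul_one]

theorem of_snd_mul_kronecker_one_mul_of_snd [Fintype m] [Fintype V] [DecidableEq m]
    [CommSemiring R] (B : Matrix l m R) (M : Matrix V V R) (C : Matrix m n R) :
    (Matrix.of fun i (p : V × m) => B i p.2) * (M ⊗ₖ (1 : Matrix m m R)) *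
        (Matrix.of fun (p : V × m) j => C p.2 j)
      = (∑ k, ∑ k', M k k') • (B * C) := by
  ext i j
  simp only [mul_apply, of_apply, kroneckerMap_apply, one_apply, mul_ite, mul_one, mul_zero,
    Fintype.sum_prod_type, Finset.sum_ite_eq', Finset.mem_univ, ↓reduceIte, Finset.sum_mul,
    Matrix.smul_apply, smul_eq_mul, Finset.mul_sum]
  rw [Finset.sum_comm]
  refine Finset.sum_congr rfl fun p _ => ?_
  rw [Finset.sum_comm]
  exact Finset.sum_congr rfl fun _ _ => Finset.sum_congr rfl fun _ _ => by ring

end Matrix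

theorem coronal_eq_sum {V : Type*} [Fintype V] [DecidableEq V] (B : Matrix V V ℝ) (t : ℝ) :
    coronal B t = ∑ k, ∑ k', (t • 1 - B)⁻¹ k k' := by
  simp [coronal, mulVec, dotProduct]

theorem det_corona_adj_general {n₁ n₂ : ℕ}
    (A₁ : Matrix (Fin n₁) (Fin n₁) ℝ) (A₂ : Matrix (Fin n₂) (Fin n₂) ℝ)
    (t : ℝ)
    (hinv : IsUnit (t • (1 : Matrix (Fin n₂) (Fin n₂) ℝ) - A₂).det) :
    (t • (1 : Matrix (Fin n₁ ⊕ Fin n₂ × Fin n₁) (Fin n₁ ⊕ Fin n₂ × Fin n₁) ℝ)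
        - coronaAdj A₁ A₂).det
      = (t • (1 : Matrix (Fin n₂) (Fin n₂) ℝ) - A₂).det ^ n₁ *
        (t • (1 : Matrix (Fin n₁) (Fin n₁) ℝ) - A₁ - coronal A₂ t • (A₁ * A₁)).det := by
  rw [coronaAdj, smul_one_sub_fromBlocks, smul_one_sub_kronecker_one,
    det_fromBlocks_kronecker_one₂₂ _ _ _ _ hinv, Fintype.card_fin, Matrix.neg_mul, Matrix.mul_neg,
    Matrix.neg_mul, neg_neg, of_snd_mul_kronecker_one_mul_of_snd, coronal_eq_sum]

/-- For signed graphs `S₁, S₂` and any real `t` with `tI − A₂` invertible,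
`det(tI − A) = det(tI − A₂)^{n₁} · det(tI − A₁ − χ_{A₂}(t) A₁²)`, where `A` is the adjacency
matrix of `S₁ ⋆ₛ S₂` and `χ_{A₂}` is the coronal of `A₂`. -/
theorem det_corona_adj {n₁ n₂ : ℕ}
    (A₁ : Matrix (Fin n₁) (Fin n₁) ℝ) (A₂ : Matrix (Fin n₂) (Fin n₂) ℝ)
    (h₁ : IsSignedAdj A₁) (h₂ : IsSignedAdj A₂) (t : ℝ)
    (hinv : IsUnit (t • (1 : Matrix (Fin n₂) (Fin n₂) ℝ) - A₂).det) :
    (t • (1 : Matrix (Fin n₁ ⊕ Fin n₂ × Fin n₁) (Fin n₁ ⊕ Fin n₂ × Fin n₁) ℝ)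
        - coronaAdj A₁ A₂).det
      = (t • (1 : Matrix (Fin n₂) (Fin n₂) ℝ) - A₂).det ^ n₁ *
        (t • (1 : Matrix (Fin n₁) (Fin n₁) ℝ) - A₁ - coronal A₂ t • (A₁ * A₁)).det :=
  det_corona_adj_general A₁ A₂ t hinv
end

section
/- Let S₁ be a signed graph with adjacency matrix A₁ (n₁×n₁) whose eigenvalues, listed with multiplicity, are θ₁,…,θ_{n₁}, and let S₂ be an r₂-net regular signed graph with adjacency matrix A₂ (n₂×n₂). Let A be the adjacency matrix of S₁ ⋆ₛ S₂. Then for every real number t such that tI_{n₂} − A₂ is invertible, det(tI_{n₁(n₂+1)} − A) · (t − r₂)^{n₁} = det(tI_{n₂} − A₂)^{n₁} · ∏_{i=1}^{n₁} ((t − θᵢ)(t − r₂) − n₂θᵢ²). -/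
open Matrix BigOperators Kronecker

lemma det_poly_hermitian {n : ℕ} (A : Matrix (Fin n) (Fin n) ℝ) (hA : A.IsHermitian)
    (t s : ℝ) :
    (t • (1 : Matrix (Fin n) (Fin n) ℝ) - A - s • (A * A)).det
      = ∏ i, (t - hA.eigenvalues i - s * (hA.eigenvalues i) ^ 2) := by
  set U : Matrix (Fin n) (Fin n) ℝ := (hA.eigenvectorUnitary : Matrix (Fin n) (Fin n) ℝ)
  have hU1 : U * star U = 1 := (Matrix.mem_unitaryGroup_iff).mp hA.eigenvectorUnitary.2
  have hU2 : star U * U = 1 := (Matrix.mem_unitaryGroup_iff').mp hA.eigenvectorUnitary.2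
  set D : Matrix (Fin n) (Fin n) ℝ := Matrix.diagonal hA.eigenvalues with hD
  have hspec : A = U * D * star U := by
    have := hA.spectral_theorem
    simpa [D, U] using this
  have hAA : A * A = U * (D * D) * star U := by
    rw [hspec]
    calc U * D * star U * (U * D * star U) = U * D * (star U * U) * (D * star U) := by
          simp only [Matrix.mul_assoc]
      _ = U * (D * D) * star U := by rw [hU2]; simp only [Matrix.mul_one, Matrix.mul_assoc]
  have key : t • (1 : Matrix (Fin n) (Fin n) ℝ) - A - s • (A * A)
      = U * (t • 1 - D - s • (D * D)) * star U := by
    rw [hAA]; conv_lhs => rw [hspec]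
    rw [Matrix.mul_sub, Matrix.mul_sub, Matrix.sub_mul, Matrix.sub_mul]
    simp [Matrix.mul_smul, Matrix.smul_mul, hU1]
  rw [key, Matrix.det_mul_right_comm, hU1, Matrix.one_mul]
  have hd : t • (1 : Matrix (Fin n) (Fin n) ℝ) - D - s • (D * D)
      = Matrix.diagonal (fun i => t - hA.eigenvalues i - s * (hA.eigenvalues i) ^ 2) := by
    rw [hD, Matrix.diagonal_mul_diagonal]
    ext i j
    rcases eq_or_ne i j with h | h
    · subst h
      simp only [Matrix.sub_apply, Matrix.smul_apply, Matrix.one_apply_eq,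
        Matrix.diagonal_apply_eq, smul_eq_mul]
      ring
    · simp [Matrix.diagonal_apply_ne _ h, Matrix.one_apply_ne h]
  rw [hd, Matrix.det_diagonal]

/-- Let `S₁` be a signed graph with eigenvalues `θ₁, …, θ_{n₁}` (with multiplicity) and `S₂`
an `r₂`-net regular signed graph.  For every real `t` with `tI − A₂` invertible,
`det(tI − A)·(t − r₂)^{n₁} = det(tI − A₂)^{n₁} · ∏ᵢ ((t − θᵢ)(t − r₂) − n₂ θᵢ²)`, where `A` is
the adjacency matrix of `S₁ ⋆ₛ S₂`. -/
theorem det_corona_adj_netRegular {n₁ n₂ : ℕ}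
    (A₁ : Matrix (Fin n₁) (Fin n₁) ℝ) (A₂ : Matrix (Fin n₂) (Fin n₂) ℝ)
    (h₁ : IsSignedAdj A₁) (h₂ : IsSignedAdj A₂)
    (r₂ : ℝ) (hreg : ∀ i, ∑ j, A₂ i j = r₂)
    (t : ℝ) (hinv : IsUnit (t • (1 : Matrix (Fin n₂) (Fin n₂) ℝ) - A₂).det) :
    (t • (1 : Matrix (Fin n₁ ⊕ Fin n₂ × Fin n₁) (Fin n₁ ⊕ Fin n₂ × Fin n₁) ℝ)
        - coronaAdj A₁ A₂).det * (t - r₂) ^ n₁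
      = (t • (1 : Matrix (Fin n₂) (Fin n₂) ℝ) - A₂).det ^ n₁ *
        ∏ i, ((t - h₁.1.eigenvalues i) * (t - r₂) - (n₂ : ℝ) * (h₁.1.eigenvalues i) ^ 2) := by
  classical
  set M : Matrix (Fin n₂) (Fin n₂) ℝ := t • 1 - A₂ with hM
  set B : Matrix (Fin n₁) (Fin n₂ × Fin n₁) ℝ := Matrix.of fun i p => A₁ i p.2 with hB
  set C : Matrix (Fin n₂ × Fin n₁) (Fin n₁) ℝ := Matrix.of fun p j => A₁ p.2 j with hC
  set s : ℝ := ∑ k, ∑ l, M⁻¹ k l with hs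
  -- block decomposition
  have hblock : t • (1 : Matrix (Fin n₁ ⊕ Fin n₂ × Fin n₁) (Fin n₁ ⊕ Fin n₂ × Fin n₁) ℝ)
      - coronaAdj A₁ A₂
      = Matrix.fromBlocks (t • 1 - A₁) (-B) (-C) (M ⊗ₖ (1 : Matrix (Fin n₁) (Fin n₁) ℝ)) := by
    have h1 : M ⊗ₖ (1 : Matrix (Fin n₁) (Fin n₁) ℝ)
        = t • (1 : Matrix (Fin n₂ × Fin n₁) (Fin n₂ × Fin n₁) ℝ)
          - A₂ ⊗ₖ (1 : Matrix (Fin n₁) (Fin n₁) ℝ) := by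
      rw [hM, ← Matrix.one_kronecker_one (m := Fin n₂) (n := Fin n₁)]
      ext ⟨p1, p2⟩ ⟨q1, q2⟩
      by_cases e1 : p1 = q1 <;> by_cases e2 : p2 = q2 <;>
        simp [Matrix.kroneckerMap_apply, Matrix.sub_apply, Matrix.smul_apply,
          Matrix.one_apply, Prod.ext_iff, e1, e2]
    rw [h1]
    ext (i | p) (j | q) <;>
      simp [coronaAdj, Matrix.fromBlocks, Matrix.one_apply, B, C, Matrix.sub_apply,
        Matrix.smul_apply]
  -- invertibility of the lower-right block
  have hdetK : (M ⊗ₖ (1 : Matrix (Fin n₁) (Fin n₁) ℝ)).det = M.det ^ n₁ := by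
    rw [Matrix.det_kronecker]
    simp
  have hKunit : IsUnit (M ⊗ₖ (1 : Matrix (Fin n₁) (Fin n₁) ℝ)).det := by
    rw [hdetK]; exact hinv.pow n₁
  haveI : Invertible (M ⊗ₖ (1 : Matrix (Fin n₁) (Fin n₁) ℝ)) :=
    Matrix.invertibleOfIsUnitDet _ hKunit
  have hinvK : ⅟ (M ⊗ₖ (1 : Matrix (Fin n₁) (Fin n₁) ℝ))
      = M⁻¹ ⊗ₖ (1 : Matrix (Fin n₁) (Fin n₁) ℝ) := by
    rw [Matrix.invOf_eq_nonsing_inv, Matrix.inv_kronecker, inv_one]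
  -- the Schur complement correction
  have hBXC : B * (M⁻¹ ⊗ₖ (1 : Matrix (Fin n₁) (Fin n₁) ℝ)) * C = s • (A₁ * A₁) := by
    ext i j
    simp only [Matrix.mul_apply, Matrix.smul_apply, smul_eq_mul, Fintype.sum_prod_type,
      Matrix.kroneckerMap_apply, hB, hC, Matrix.of_apply, Matrix.one_apply, mul_ite, mul_one,
      mul_zero, ite_mul, zero_mul, Finset.sum_ite_eq, Finset.mem_univ, if_true, hs]
    simp only [Finset.sum_ite_eq', Finset.mem_univ, if_true, Finset.sum_mul, Finset.mul_sum]
    rw [Finset.sum_comm]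
    refine Finset.sum_congr rfl fun b _ => ?_
    rw [Finset.sum_comm]
    refine Finset.sum_congr rfl fun k _ => ?_
    refine Finset.sum_congr rfl fun l _ => ?_
    ring
  -- row sums of M and the key scalar identity
  have hsum : (t - r₂) * s = (n₂ : ℝ) := by
    have hrow : ∀ l, ∑ j, M l j = t - r₂ := by
      intro l
      rw [hM]
      simp [Matrix.sub_apply, Matrix.smul_apply, Matrix.one_apply, Finset.sum_sub_distrib,
        hreg l]
    have hMiM : M⁻¹ * M = 1 := Matrix.nonsing_inv_mul M hinv
    have key : ∑ k, ∑ j, (M⁻¹ * M) k j = (n₂ : ℝ) := by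
      rw [hMiM]; simp [Matrix.one_apply]
    calc (t - r₂) * s = ∑ k, ∑ l, M⁻¹ k l * (t - r₂) := by
          rw [hs, Finset.mul_sum]
          congr 1; funext k
          rw [Finset.mul_sum]
          congr 1; funext l
          ring
      _ = ∑ k, ∑ l, M⁻¹ k l * (∑ j, M l j) := by
          congr 1; funext k; congr 1; funext l; rw [hrow l]
      _ = ∑ k, ∑ j, (M⁻¹ * M) k j := by
          congr 1; funext k
          simp only [Matrix.mul_apply, Finset.mul_sum]
          rw [Finset.sum_comm]
      _ = (n₂ : ℝ) := key
  -- put it together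
  rw [hblock, Matrix.det_fromBlocks₂₂, hinvK]
  have hneg : (t • 1 - A₁) - (-B) * (M⁻¹ ⊗ₖ (1 : Matrix (Fin n₁) (Fin n₁) ℝ)) * (-C)
      = t • 1 - A₁ - s • (A₁ * A₁) := by
    simp only [Matrix.neg_mul, Matrix.mul_neg, neg_neg]
    rw [hBXC]
  rw [hneg, hdetK, det_poly_hermitian A₁ h₁.1 t s]
  rw [mul_assoc, mul_comm ((∏ i, (t - h₁.1.eigenvalues i - s * (h₁.1.eigenvalues i) ^ 2))) _]
  congr 1
  rw [show (t - r₂) ^ n₁ = ∏ _i : Fin n₁, (t - r₂) by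
    rw [Finset.prod_const, Finset.card_univ, Fintype.card_fin]]
  rw [← Finset.prod_mul_distrib]
  refine Finset.prod_congr rfl fun i _ => ?_
  linear_combination (-(h₁.1.eigenvalues i ^ 2)) * hsum
end

section
/- Let S₁, S₂ be signed graphs with adjacency matrices A₁ (n₁×n₁) and A₂ (n₂×n₂), and let A be the adjacency matrix of S₁ ⋆ₛ S₂, indexed by Fin n₁ ⊕ (Fin n₂ × Fin n₁). Suppose v ∈ ℝ^{n₂} satisfies A₂v = θv and j_{n₂}ᵀv = 0. Then for every w ∈ ℝ^{n₁}, the vector x defined by x(inl i) = 0 and x(inr (k,j)) = v_k·w_j satisfies A·x = θ·x; in particular, if v ≠ 0 and w ≠ 0, then θ is an eigenvalue of A, and the θ-eigenspace of A has dimension at least n₁·(dimension of {v : A₂v = θv and j_{n₂}ᵀv = 0}). -/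
/-!
A vector that vanishes on the `Fin n₁` block and whose columns `x(·, j)` are θ-eigenvectors of
`A₂` with zero sum is a θ-eigenvector of the corona: the `jᵀ ⊗ A₁` rows only see the column
sums, which vanish, while `A₂ ⊗ I` acts column by column. Such vectors form a copy of
`Fin n₁ → W` inside the θ-eigenspace, which gives the dimension bound.
-/

open Matrix BigOperators Kronecker

open Module

section

variable {n₁ : ℕ} {V : Type*}

variable (n₁ V) in
def coronaColumns : (Fin n₁ → V → ℝ) →ₗ[ℝ] (Fin n₁ ⊕ V × Fin n₁ → ℝ) where
  toFun f := Sum.elim (fun _ => 0) fun p => f p.2 p.1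
  map_add' f g := by funext a; rcases a with i | p <;> simp
  map_smul' c f := by funext a; rcases a with i | p <;> simp

lemma coronaColumns_injective : Function.Injective (coronaColumns n₁ V) := by
  intro f g hfg
  funext j k
  simpa [coronaColumns] using congrFun hfg (Sum.inr (k, j))

variable [Fintype V] [DecidableEq V]

lemma coronaAdj_mulVec_coronaColumns (A₁ : Matrix (Fin n₁) (Fin n₁) ℝ) (A₂ : Matrix V V ℝ)
    (f : Fin n₁ → V → ℝ) :
    coronaAdj A₁ A₂ *ᵥ coronaColumns n₁ V f =
      Sum.elim (A₁ *ᵥ fun j => ∑ k, f j k) fun p => (A₂ *ᵥ f p.2) p.1 := by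
  rw [coronaAdj, fromBlocks_mulVec]
  funext a
  rcases a with i | ⟨k, j⟩
  · simp [coronaColumns, mulVec, dotProduct, Function.comp_def, Fintype.sum_prod_type,
      Finset.mul_sum]
    exact Finset.sum_comm
  · simp [coronaColumns, mulVec, dotProduct, Function.comp_def, Fintype.sum_prod_type, one_apply]

lemma coronaColumns_mem_eigenspace (A₁ : Matrix (Fin n₁) (Fin n₁) ℝ) (A₂ : Matrix V V ℝ)
    {θ : ℝ} {f : Fin n₁ → V → ℝ} (hf : ∀ j, A₂ *ᵥ f j = θ • f j ∧ ∑ k, f j k = 0) :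
    coronaColumns n₁ V f ∈ End.eigenspace (toLin' (coronaAdj A₁ A₂)) θ := by
  rw [End.mem_eigenspace_iff, toLin'_apply, coronaAdj_mulVec_coronaColumns]
  funext a
  rcases a with i | ⟨k, j⟩
  · simp [coronaColumns, hf, mulVec, dotProduct]
  · simp [coronaColumns, hf]

lemma mul_finrank_le_finrank_eigenspace_coronaAdj (A₁ : Matrix (Fin n₁) (Fin n₁) ℝ)
    (A₂ : Matrix V V ℝ) {θ : ℝ} (W : Submodule ℝ (V → ℝ))
    (hW : ∀ u ∈ W, A₂ *ᵥ u = θ • u ∧ ∑ k, u k = 0) :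
    n₁ * finrank ℝ W ≤ finrank ℝ (End.eigenspace (toLin' (coronaAdj A₁ A₂)) θ) := by
  let Φ := (coronaColumns n₁ V).comp (W.subtype.compLeft (Fin n₁))
  have hΦ : Function.Injective Φ :=
    coronaColumns_injective.comp fun f g h => funext fun j => Subtype.ext (congrFun h j)
  have hmem : ∀ f, Φ f ∈ End.eigenspace (toLin' (coronaAdj A₁ A₂)) θ := fun f =>
    coronaColumns_mem_eigenspace A₁ A₂ fun j => hW _ (f j).2
  calc n₁ * finrank ℝ W = finrank ℝ (Fin n₁ → W) := by simp [finrank_pi_fintype]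
    _ ≤ _ := LinearMap.finrank_le_finrank_of_injective (f := Φ.codRestrict _ hmem)
        fun f g h => hΦ (congrArg Subtype.val h)

end

theorem corona_adj_eigenvector_general {n₁ n₂ : ℕ}
    (A₁ : Matrix (Fin n₁) (Fin n₁) ℝ) (A₂ : Matrix (Fin n₂) (Fin n₂) ℝ)
    (θ : ℝ) (v : Fin n₂ → ℝ)
    (hv : A₂.mulVec v = θ • v) (hsum : ∑ k, v k = 0) :
    (∀ w : Fin n₁ → ℝ,
        (coronaAdj A₁ A₂).mulVec
            (Sum.elim (fun _ : Fin n₁ => (0 : ℝ)) fun p : Fin n₂ × Fin n₁ => v p.1 * w p.2)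
          = θ • Sum.elim (fun _ : Fin n₁ => (0 : ℝ)) fun p : Fin n₂ × Fin n₁ => v p.1 * w p.2)
    ∧ (v ≠ 0 → ∀ w : Fin n₁ → ℝ, w ≠ 0 →
        Module.End.HasEigenvalue (Matrix.toLin' (coronaAdj A₁ A₂)) θ
        ∧ ∀ W : Submodule ℝ (Fin n₂ → ℝ),
            (∀ u, u ∈ W ↔ A₂.mulVec u = θ • u ∧ ∑ k, u k = 0) →
            n₁ * Module.finrank ℝ W ≤
              Module.finrank ℝ (Module.End.eigenspace (Matrix.toLin' (coronaAdj A₁ A₂)) θ)) := by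
  have heigen (w : Fin n₁ → ℝ) : coronaColumns n₁ (Fin n₂) (fun j => w j • v) ∈
      End.eigenspace (toLin' (coronaAdj A₁ A₂)) θ :=
    coronaColumns_mem_eigenspace A₁ A₂ fun j =>
      ⟨by rw [mulVec_smul, hv, smul_comm], by simp [← Finset.mul_sum, hsum]⟩
  refine ⟨fun w => ?_, fun hv0 w hw0 => ⟨?_, fun W hW =>
    mul_finrank_le_finrank_eigenspace_coronaAdj A₁ A₂ W fun u hu => (hW u).1 hu⟩⟩
  · simpa [coronaColumns, mul_comm] using End.mem_eigenspace_iff.1 (heigen w)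
  · refine End.hasEigenvalue_of_hasEigenvector ⟨heigen w, ?_⟩
    rw [← map_zero (coronaColumns n₁ (Fin n₂))]
    refine coronaColumns_injective.ne fun h => ?_
    obtain ⟨k, hk⟩ := Function.ne_iff.1 hv0
    obtain ⟨j, hj⟩ := Function.ne_iff.1 hw0
    exact mul_ne_zero hj hk (congrFun (congrFun h j) k)

/-- If `A₂ v = θ v` and `jᵀ v = 0`, then for every `w` the vector `x` with `x(inl i) = 0` and
`x(inr (k,j)) = v_k w_j` satisfies `A x = θ x`, where `A` is the adjacency matrix of
`S₁ ⋆ₛ S₂`; in particular, if `v ≠ 0` and `w ≠ 0` then `θ` is an eigenvalue of `A` and the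
`θ`-eigenspace of `A` has dimension at least `n₁ · dim {v : A₂ v = θ v, jᵀ v = 0}`. -/
theorem corona_adj_eigenvector {n₁ n₂ : ℕ}
    (A₁ : Matrix (Fin n₁) (Fin n₁) ℝ) (A₂ : Matrix (Fin n₂) (Fin n₂) ℝ)
    (h₁ : IsSignedAdj A₁) (h₂ : IsSignedAdj A₂)
    (θ : ℝ) (v : Fin n₂ → ℝ)
    (hv : A₂.mulVec v = θ • v) (hsum : ∑ k, v k = 0) :
    (∀ w : Fin n₁ → ℝ,
        (coronaAdj A₁ A₂).mulVec
            (Sum.elim (fun _ : Fin n₁ => (0 : ℝ)) fun p : Fin n₂ × Fin n₁ => v p.1 * w p.2)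
          = θ • Sum.elim (fun _ : Fin n₁ => (0 : ℝ)) fun p : Fin n₂ × Fin n₁ => v p.1 * w p.2)
    ∧ (v ≠ 0 → ∀ w : Fin n₁ → ℝ, w ≠ 0 →
        Module.End.HasEigenvalue (Matrix.toLin' (coronaAdj A₁ A₂)) θ
        ∧ ∀ W : Submodule ℝ (Fin n₂ → ℝ),
            (∀ u, u ∈ W ↔ A₂.mulVec u = θ • u ∧ ∑ k, u k = 0) →
            n₁ * Module.finrank ℝ W ≤
              Module.finrank ℝ (Module.End.eigenspace (Matrix.toLin' (coronaAdj A₁ A₂)) θ)) :=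
  corona_adj_eigenvector_general A₁ A₂ θ v hv hsum
end

section
/- Let S₁ be a signed graph with adjacency matrix A₁ (n₁×n₁) and let S₂ be an r₂-net regular signed graph with adjacency matrix A₂ (n₂×n₂), and let A be the adjacency matrix of S₁ ⋆ₛ S₂. Then for every eigenvalue θ of A₁, the two real numbers (θ + r₂ ± √((1 + 4n₂)θ² + (r₂ − 2θ)r₂))/2 (whose discriminant (1+4n₂)θ² + (r₂−2θ)r₂ = (θ−r₂)² + 4n₂θ² is nonnegative) are eigenvalues of A. -/
open Matrix BigOperators Kronecker

/-- Membership in the spectrum of a real matrix is equivalent to having an eigenvector. -/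
lemma spec_iff_eig {m : Type*} [Fintype m] [DecidableEq m]
    (M : Matrix m m ℝ) (μ : ℝ) :
    μ ∈ spectrum ℝ M ↔ ∃ v, v ≠ 0 ∧ M.mulVec v = μ • v := by
  rw [← AlgEquiv.spectrum_eq (Matrix.toLinAlgEquiv' : Matrix m m ℝ ≃ₐ[ℝ] _) M,
    ← Module.End.hasEigenvalue_iff_mem_spectrum]
  constructor
  · intro h
    obtain ⟨v, hv⟩ := h.exists_hasEigenvector
    exact ⟨v, hv.2, by simpa [Matrix.toLinAlgEquiv'_apply] using hv.apply_eq_smul⟩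
  · rintro ⟨v, hv, h⟩
    exact Module.End.hasEigenvalue_of_hasEigenvector
      ⟨Module.End.mem_eigenspace_iff.mpr (by simpa [Matrix.toLinAlgEquiv'_apply] using h), hv⟩

/-- Any root of `x² - (θ + r₂)x + θr₂ - n₂θ² = 0` is an eigenvalue of the corona adjacency
matrix, when `θ` is an eigenvalue of `A₁` and `A₂` is `r₂`-net regular. -/
lemma corona_root_mem {n₁ n₂ : ℕ}
    (A₁ : Matrix (Fin n₁) (Fin n₁) ℝ) (A₂ : Matrix (Fin n₂) (Fin n₂) ℝ)
    (hn₂ : 1 ≤ n₂) (r₂ : ℝ) (hreg : ∀ i, ∑ j, A₂ i j = r₂)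
    (θ lam : ℝ) (hroot : lam ^ 2 = (θ + r₂) * lam - θ * r₂ + (n₂ : ℝ) * θ ^ 2)
    (hθ : θ ∈ spectrum ℝ A₁) :
    lam ∈ spectrum ℝ (coronaAdj A₁ A₂) := by
  obtain ⟨v, hv, hAv⟩ := (spec_iff_eig A₁ θ).mp hθ
  have hv' : ∀ i, ∑ j, A₁ i j * v j = θ * v i := fun i => congrFun hAv i
  obtain ⟨a, b, hab, e1, e2⟩ :
      ∃ a b : ℝ, (a ≠ 0 ∨ b ≠ 0) ∧ θ * a + (n₂ : ℝ) * θ * b = lam * a ∧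
        θ * a + r₂ * b = lam * b := by
    by_cases h : θ = 0 ∧ lam = r₂
    · exact ⟨0, 1, Or.inr one_ne_zero, by simp [h.1], by simp [h.1, h.2]⟩
    · refine ⟨lam - r₂, θ, ?_, by linear_combination -hroot, by ring⟩
      by_contra hc
      push_neg at hc
      exact h ⟨hc.2, by linarith [sub_eq_zero.mp (not_not.mp (by simpa using hc.1))]⟩
  refine (spec_iff_eig _ _).mpr
    ⟨Sum.elim (fun i => a * v i) (fun p : Fin n₂ × Fin n₁ => b * v p.2), ?_, ?_⟩
  · obtain ⟨i, hi⟩ := Function.ne_iff.mp hv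
    rcases hab with ha | hb
    · intro h0
      have := congrFun h0 (Sum.inl i)
      simp only [Sum.elim_inl, Pi.zero_apply, mul_eq_zero] at this
      exact this.elim (fun h => ha h) (fun h => hi h)
    · intro h0
      have := congrFun h0 (Sum.inr (⟨0, hn₂⟩, i))
      simp only [Sum.elim_inr, Pi.zero_apply, mul_eq_zero] at this
      exact this.elim (fun h => hb h) (fun h => hi h)
  · funext x
    cases x with
    | inl i =>
      simp only [coronaAdj, mulVec, dotProduct, Fintype.sum_sum_type,
        fromBlocks_apply₁₁, fromBlocks_apply₁₂, of_apply, Sum.elim_inl, Sum.elim_inr,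
        Fintype.sum_prod_type, Pi.smul_apply, smul_eq_mul]
      have h1 : ∑ j, A₁ i j * (a * v j) = a * (θ * v i) := by
        rw [← hv' i, Finset.mul_sum]
        exact Finset.sum_congr rfl fun j _ => by ring
      have h2 : ∀ q : Fin n₂, ∑ j, A₁ i j * (b * v j) = b * (θ * v i) := by
        intro q
        rw [← hv' i, Finset.mul_sum]
        exact Finset.sum_congr rfl fun j _ => by ring
      rw [h1, Finset.sum_congr rfl (fun q _ => h2 q), Finset.sum_const, Finset.card_univ,
        Fintype.card_fin, nsmul_eq_mul]
      linear_combination (v i) * e1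
    | inr p =>
      simp only [coronaAdj, mulVec, dotProduct, Fintype.sum_sum_type,
        fromBlocks_apply₂₁, fromBlocks_apply₂₂, of_apply, Sum.elim_inl, Sum.elim_inr,
        Fintype.sum_prod_type, kroneckerMap_apply, Pi.smul_apply, smul_eq_mul]
      have h1 : ∑ j, A₁ p.2 j * (a * v j) = a * (θ * v p.2) := by
        rw [← hv' p.2, Finset.mul_sum]
        exact Finset.sum_congr rfl fun j _ => by ring
      have h2 : ∀ q : Fin n₂, ∑ k, A₂ p.1 q * (1 : Matrix (Fin n₁) (Fin n₁) ℝ) p.2 k * (b * v k)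
          = A₂ p.1 q * (b * v p.2) := by
        intro q
        simp [Matrix.one_apply, mul_ite, Finset.sum_ite_eq]
      rw [h1, Finset.sum_congr rfl (fun q _ => h2 q), ← Finset.sum_mul, hreg]
      linear_combination (v p.2) * e2

/-- Let `S₁` be a signed graph and `S₂` an `r₂`-net regular signed graph on `n₂` vertices.
For every eigenvalue `θ` of `A₁`, the two real numbers
`(θ + r₂ ± √((1 + 4n₂)θ² + (r₂ − 2θ)r₂))/2` (whose discriminant equals `(θ − r₂)² + 4n₂θ²`
and is nonnegative) are eigenvalues of the adjacency matrix `A` of `S₁ ⋆ₛ S₂`. -/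
theorem corona_adj_eigenvalues_netRegular {n₁ n₂ : ℕ}
    (A₁ : Matrix (Fin n₁) (Fin n₁) ℝ) (A₂ : Matrix (Fin n₂) (Fin n₂) ℝ)
    (h₁ : IsSignedAdj A₁) (h₂ : IsSignedAdj A₂) (hn₂ : 1 ≤ n₂)
    (r₂ : ℝ) (hreg : ∀ i, ∑ j, A₂ i j = r₂)
    (θ : ℝ) (hθ : θ ∈ spectrum ℝ A₁) :
    (1 + 4 * (n₂ : ℝ)) * θ ^ 2 + (r₂ - 2 * θ) * r₂ = (θ - r₂) ^ 2 + 4 * (n₂ : ℝ) * θ ^ 2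
    ∧ 0 ≤ (1 + 4 * (n₂ : ℝ)) * θ ^ 2 + (r₂ - 2 * θ) * r₂
    ∧ (θ + r₂ + Real.sqrt ((1 + 4 * (n₂ : ℝ)) * θ ^ 2 + (r₂ - 2 * θ) * r₂)) / 2
        ∈ spectrum ℝ (coronaAdj A₁ A₂)
    ∧ (θ + r₂ - Real.sqrt ((1 + 4 * (n₂ : ℝ)) * θ ^ 2 + (r₂ - 2 * θ) * r₂)) / 2
        ∈ spectrum ℝ (coronaAdj A₁ A₂) := by
  have hD : (1 + 4 * (n₂ : ℝ)) * θ ^ 2 + (r₂ - 2 * θ) * r₂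
      = (θ - r₂) ^ 2 + 4 * (n₂ : ℝ) * θ ^ 2 := by ring
  have hn : (0 : ℝ) ≤ (n₂ : ℝ) := Nat.cast_nonneg n₂
  have hD0 : 0 ≤ (1 + 4 * (n₂ : ℝ)) * θ ^ 2 + (r₂ - 2 * θ) * r₂ := by
    rw [hD]
    have := sq_nonneg (θ - r₂)
    have := sq_nonneg θ
    nlinarith
  have hs : Real.sqrt ((1 + 4 * (n₂ : ℝ)) * θ ^ 2 + (r₂ - 2 * θ) * r₂) ^ 2
      = (1 + 4 * (n₂ : ℝ)) * θ ^ 2 + (r₂ - 2 * θ) * r₂ := Real.sq_sqrt hD0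
  refine ⟨hD, hD0, ?_, ?_⟩
  · exact corona_root_mem A₁ A₂ hn₂ r₂ hreg θ _ (by linear_combination hs / 4) hθ
  · exact corona_root_mem A₁ A₂ hn₂ r₂ hreg θ _ (by linear_combination hs / 4) hθ
end

section
/- Let S₁, S₂ be signed graphs with adjacency matrices A₁ (n₁×n₁) and A₂ (n₂×n₂), with degree matrix D₁ = D_{A₁} and Laplacians L₁ = L_{A₁}, L₂ = L_{A₂}, and let L be the Laplacian of S₁ ⋆ₛ S₂. For every real t such that the n₁n₂ × n₁n₂ matrix B(t) = (tI_{n₂} − L₂) ⊗ I_{n₁} − I_{n₂} ⊗ D₁ is invertible, det(tI_{n₁(n₂+1)} − L) = det(B(t)) · det(tI_{n₁} − L₁ − n₂D₁ − (j_{n₂}ᵀ ⊗ A₁)·B(t)⁻¹·(j_{n₂} ⊗ A₁)). -/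
open Matrix BigOperators Kronecker

/-- The degree matrix of a signed graph: the diagonal matrix of row sums of `|A|`. -/
def degMat {n : ℕ} (A : Matrix (Fin n) (Fin n) ℝ) : Matrix (Fin n) (Fin n) ℝ :=
  Matrix.diagonal fun i => ∑ j, |A i j|

/-- The Laplacian matrix `L_A = D_A − A` of a signed graph. -/
def lap {n : ℕ} (A : Matrix (Fin n) (Fin n) ℝ) : Matrix (Fin n) (Fin n) ℝ :=
  degMat A - A

/-- The Laplacian matrix of the s-neighbourhood corona `S₁ ⋆ₛ S₂`: the block matrix
`[[L₁ + n₂D₁, −(jᵀ ⊗ A₁)], [−(jᵀ ⊗ A₁)ᵀ, L₂ ⊗ I + I ⊗ D₁]]`. -/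
def coronaLap {n₁ n₂ : ℕ} (A₁ : Matrix (Fin n₁) (Fin n₁) ℝ) (A₂ : Matrix (Fin n₂) (Fin n₂) ℝ) :
    Matrix (Fin n₁ ⊕ Fin n₂ × Fin n₁) (Fin n₁ ⊕ Fin n₂ × Fin n₁) ℝ :=
  Matrix.fromBlocks (lap A₁ + (n₂ : ℝ) • degMat A₁)
    (Matrix.of fun i p => -(A₁ i p.2))
    (Matrix.of fun p j => -(A₁ p.2 j))
    (lap A₂ ⊗ₖ (1 : Matrix (Fin n₁) (Fin n₁) ℝ) + (1 : Matrix (Fin n₂) (Fin n₂) ℝ) ⊗ₖ degMat A₁)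

/-- The matrix `B(t) = (tI − L₂) ⊗ I − I ⊗ D₁`. -/
def lapBmat {n₁ n₂ : ℕ} (A₁ : Matrix (Fin n₁) (Fin n₁) ℝ) (A₂ : Matrix (Fin n₂) (Fin n₂) ℝ)
    (t : ℝ) : Matrix (Fin n₂ × Fin n₁) (Fin n₂ × Fin n₁) ℝ :=
  (t • (1 : Matrix (Fin n₂) (Fin n₂) ℝ) - lap A₂) ⊗ₖ (1 : Matrix (Fin n₁) (Fin n₁) ℝ)
    - (1 : Matrix (Fin n₂) (Fin n₂) ℝ) ⊗ₖ degMat A₁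

lemma lapBmat_eq {n₁ n₂ : ℕ} (A₁ : Matrix (Fin n₁) (Fin n₁) ℝ)
    (A₂ : Matrix (Fin n₂) (Fin n₂) ℝ) (t : ℝ) :
    lapBmat A₁ A₂ t = t • (1 : Matrix (Fin n₂ × Fin n₁) (Fin n₂ × Fin n₁) ℝ)
      - (lap A₂ ⊗ₖ (1 : Matrix (Fin n₁) (Fin n₁) ℝ)
        + (1 : Matrix (Fin n₂) (Fin n₂) ℝ) ⊗ₖ degMat A₁) := by
  ext ⟨i, j⟩ ⟨k, l⟩
  by_cases h1 : i = k <;> by_cases h2 : j = l <;>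
    simp [lapBmat, Matrix.one_apply, Prod.ext_iff, h1, h2] <;> ring

/-- For signed graphs `S₁, S₂` and any real `t` with `B(t) = (tI − L₂) ⊗ I − I ⊗ D₁`
invertible, the Laplacian `L` of `S₁ ⋆ₛ S₂` satisfies
`det(tI − L) = det(B(t)) · det(tI − L₁ − n₂D₁ − (jᵀ ⊗ A₁) B(t)⁻¹ (j ⊗ A₁))`. -/
theorem det_corona_lap {n₁ n₂ : ℕ}
    (A₁ : Matrix (Fin n₁) (Fin n₁) ℝ) (A₂ : Matrix (Fin n₂) (Fin n₂) ℝ)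
    (h₁ : IsSignedAdj A₁) (h₂ : IsSignedAdj A₂) (t : ℝ)
    (hinv : IsUnit (lapBmat A₁ A₂ t).det) :
    (t • (1 : Matrix (Fin n₁ ⊕ Fin n₂ × Fin n₁) (Fin n₁ ⊕ Fin n₂ × Fin n₁) ℝ)
        - coronaLap A₁ A₂).det
      = (lapBmat A₁ A₂ t).det *
        (t • (1 : Matrix (Fin n₁) (Fin n₁) ℝ) - lap A₁ - (n₂ : ℝ) • degMat A₁
          - (Matrix.of fun i (p : Fin n₂ × Fin n₁) => A₁ i p.2) * (lapBmat A₁ A₂ t)⁻¹ *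
            (Matrix.of fun (p : Fin n₂ × Fin n₁) j => A₁ p.2 j)).det := by
  have hblock : t • (1 : Matrix (Fin n₁ ⊕ Fin n₂ × Fin n₁) (Fin n₁ ⊕ Fin n₂ × Fin n₁) ℝ)
      - coronaLap A₁ A₂
      = Matrix.fromBlocks (t • 1 - lap A₁ - (n₂ : ℝ) • degMat A₁)
          (Matrix.of fun i (p : Fin n₂ × Fin n₁) => A₁ i p.2)
          (Matrix.of fun (p : Fin n₂ × Fin n₁) j => A₁ p.2 j)
          (lapBmat A₁ A₂ t) := by
    rw [lapBmat_eq, coronaLap]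
    ext i j
    cases i <;> cases j <;> simp [fromBlocks, Matrix.one_apply] <;> ring
  haveI : Invertible (lapBmat A₁ A₂ t) := (lapBmat A₁ A₂ t).invertibleOfIsUnitDet hinv
  rw [hblock, Matrix.det_fromBlocks₂₂, Matrix.invOf_eq_nonsing_inv]
end

section
/- Let S₁ be an r₁-regular signed graph with adjacency matrix A₁ (n₁×n₁) whose Laplacian L₁ has eigenvalues λ₁,…,λ_{n₁} listed with multiplicity, and let S₂ be an r₂-regular, r₃-net regular signed graph with adjacency matrix A₂ (n₂×n₂) and Laplacian L₂. Let L be the Laplacian of S₁ ⋆ₛ S₂. Then for every real t such that (t − r₁)I_{n₂} − L₂ is invertible, det(tI_{n₁(n₂+1)} − L) · (t − r₁ − (r₂ − r₃))^{n₁} = det((t − r₁)I_{n₂} − L₂)^{n₁} · ∏_{i=1}^{n₁} ((t − r₁n₂ − λᵢ)(t − r₁ − (r₂ − r₃)) − n₂(r₁ − λᵢ)²). -/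
open Matrix BigOperators Kronecker

/-! After the shift by `t`, the corona Laplacian is a block matrix whose lower right block is
`N ⊗ I` with `N = (t - r₁)I - L₂`, because `D₁ = r₁I`. Each off-diagonal block `jᵀ ⊗ A₁` is `A₁`
repeated `n₂` times, so the Schur complement is `tI - L₁ - n₂r₁I - (jᵀN⁻¹j) A₁²`. As `S₂` is
regular and net regular, `N` has constant row sums `s = t - r₁ - (r₂ - r₃)`, hence
`s · jᵀN⁻¹j = n₂`, and multiplying by `s^{n₁}` clears the denominator (also when `s = 0`, which
forces `n₂ = 0`). Finally `A₁ = r₁I - L₁`, so what remains is the determinant of a polynomial in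
the symmetric matrix `L₁`: the product of that polynomial over the eigenvalues of `L₁`. -/

open Polynomial in
theorem Matrix.IsHermitian.det_aeval {n : Type*} [Fintype n] [DecidableEq n]
    {A : Matrix n n ℝ} (hA : A.IsHermitian) (p : ℝ[X]) :
    (aeval A p).det = ∏ i, p.eval (hA.eigenvalues i) := by
  rw [← cfc_polynomial p A hA.isSelfAdjoint, hA.cfc_eq]
  simp [IsHermitian.cfc, -Unitary.conjStarAlgAut_apply]

theorem Matrix.mul_sum_inv_eq_card {n K : Type*} [Fintype n] [DecidableEq n] [CommRing K]
    {N : Matrix n n K} (hN : IsUnit N.det) {s : K} (hrow : N *ᵥ 1 = s • 1) :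
    s * ∑ i, ∑ j, N⁻¹ i j = Fintype.card n := by
  have hinv : s • (N⁻¹ *ᵥ 1) = 1 := by
    rw [← mulVec_smul, ← hrow, mulVec_mulVec, nonsing_inv_mul N hN, one_mulVec]
  calc s * ∑ i, ∑ j, N⁻¹ i j = ∑ i, (s • (N⁻¹ *ᵥ 1)) i := by
        simp [Finset.mul_sum, mulVec, dotProduct_one]
    _ = Fintype.card n := by rw [hinv]; simp

theorem Matrix.of_snd_mul_kronecker_one_mul_of_snd_s10 {m k R : Type*} [Fintype m] [Fintype k]
    [DecidableEq m] [CommSemiring R] (X Y : Matrix m m R) (M : Matrix k k R) :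
    (Matrix.of (fun i (p : k × m) => X i p.2) : Matrix m (k × m) R) * (M ⊗ₖ (1 : Matrix m m R))
        * (Matrix.of (fun (p : k × m) j => Y p.2 j) : Matrix (k × m) m R)
      = (∑ a, ∑ b, M a b) • (X * Y) := by
  ext i j
  simp only [mul_apply, of_apply, kroneckerMap_apply, one_apply, mul_ite, mul_one, mul_zero,
    Fintype.sum_prod_type, Finset.sum_ite_eq', Finset.mem_univ, ↓reduceIte, Finset.sum_mul,
    smul_apply, smul_eq_mul, Finset.mul_sum]
  rw [Finset.sum_comm]
  refine Finset.sum_congr rfl fun l _ => ?_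
  rw [Finset.sum_comm]
  exact Finset.sum_congr rfl fun a _ => Finset.sum_congr rfl fun b _ => by ring

theorem Matrix.det_fromBlocks_of_snd_kronecker_one {m k R : Type*} [Fintype m] [Fintype k]
    [DecidableEq m] [DecidableEq k] [CommRing R] (P X Y : Matrix m m R) {N : Matrix k k R}
    (hN : IsUnit N.det) :
    (fromBlocks P (Matrix.of fun i (p : k × m) => X i p.2) (Matrix.of fun (p : k × m) j => Y p.2 j)
        (N ⊗ₖ (1 : Matrix m m R))).det
      = N.det ^ Fintype.card m * (P - (∑ a, ∑ b, N⁻¹ a b) • (X * Y)).det := by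
  have : Invertible (N ⊗ₖ (1 : Matrix m m R)) := invertibleOfIsUnitDet _ <| by
    rw [det_kronecker, det_one, one_pow, mul_one]
    exact hN.pow _
  rw [det_fromBlocks₂₂, invOf_eq_nonsing_inv, inv_kronecker, inv_one,
    of_snd_mul_kronecker_one_mul_of_snd_s10, det_kronecker, det_one, one_pow, mul_one]

theorem degMat_eq_smul_one {n : ℕ} {A : Matrix (Fin n) (Fin n) ℝ} {r : ℝ}
    (hreg : ∀ i, ∑ j, |A i j| = r) : degMat A = r • 1 := by
  simp only [degMat, hreg, smul_one_eq_diagonal]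

theorem lap_mulVec_one {n : ℕ} {A : Matrix (Fin n) (Fin n) ℝ} {r r' : ℝ}
    (hreg : ∀ i, ∑ j, |A i j| = r) (hnet : ∀ i, ∑ j, A i j = r') :
    lap A *ᵥ 1 = (r - r') • 1 := by
  ext i
  simp [lap, degMat_eq_smul_one hreg, mulVec, dotProduct_one, one_apply, hnet]

theorem smul_one_sub_coronaLap {n₁ n₂ : ℕ} (A₁ : Matrix (Fin n₁) (Fin n₁) ℝ)
    (A₂ : Matrix (Fin n₂) (Fin n₂) ℝ) {r₁ : ℝ} (hreg₁ : ∀ i, ∑ j, |A₁ i j| = r₁) (t : ℝ) :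
    t • 1 - coronaLap A₁ A₂
      = fromBlocks (t • 1 - (lap A₁ + (n₂ : ℝ) • degMat A₁))
          (Matrix.of fun i p => A₁ i p.2) (Matrix.of fun p j => A₁ p.2 j)
          (((t - r₁) • 1 - lap A₂) ⊗ₖ (1 : Matrix (Fin n₁) (Fin n₁) ℝ)) := by
  rw [coronaLap, ← fromBlocks_one, fromBlocks_smul, sub_eq_add_neg _ (fromBlocks _ _ _ _),
    fromBlocks_neg, fromBlocks_add, degMat_eq_smul_one hreg₁]
  refine fromBlocks_inj.mpr ⟨(sub_eq_add_neg _ _).symm, ?_, ?_, ?_⟩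
  · ext; simp
  · ext; simp
  · rw [sub_eq_add_neg _ (lap A₂), ← neg_one_smul ℝ (lap A₂), add_kronecker, smul_kronecker,
      smul_kronecker, kronecker_smul, one_kronecker_one]
    module

open Polynomial in
theorem det_smul_sub_smul_mul_self_of_regular {n : ℕ} {A : Matrix (Fin n) (Fin n) ℝ} {r : ℝ}
    (hreg : ∀ i, ∑ j, |A i j| = r) (hL : (lap A).IsHermitian) (s t a b : ℝ) :
    (s • (t • 1 - (lap A + a • degMat A)) - b • (A * A)).det
      = ∏ i, ((t - r * a - hL.eigenvalues i) * s - b * (r - hL.eigenvalues i) ^ 2) := by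
  have hAA : A * A = (r • 1 - lap A) ^ 2 := by
    rw [sq, lap, degMat_eq_smul_one hreg, sub_sub_cancel]
  have hpoly : s • (t • 1 - (lap A + a • degMat A)) - b • (A * A)
      = aeval (lap A) ((C t - C (r * a) - X) * C s - C b * (C r - X) ^ 2) := by
    rw [degMat_eq_smul_one hreg, hAA]
    simp only [map_sub, map_mul, map_pow, aeval_C, aeval_X, Algebra.algebraMap_eq_smul_one,
      Algebra.mul_smul_comm, Algebra.smul_mul_assoc, mul_one, one_mul]
    module
  rw [hpoly, hL.det_aeval]
  simp

theorem det_corona_lap_regular_general {n₁ n₂ : ℕ}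
    (A₁ : Matrix (Fin n₁) (Fin n₁) ℝ) (A₂ : Matrix (Fin n₂) (Fin n₂) ℝ)
    (r₁ r₂ r₃ : ℝ)
    (hreg₁ : ∀ i, ∑ j, |A₁ i j| = r₁)
    (hreg₂ : ∀ i, ∑ j, |A₂ i j| = r₂)
    (hnet₂ : ∀ i, ∑ j, A₂ i j = r₃)
    (hL₁ : (lap A₁).IsHermitian)
    (t : ℝ) (hinv : IsUnit ((t - r₁) • (1 : Matrix (Fin n₂) (Fin n₂) ℝ) - lap A₂).det) :
    (t • (1 : Matrix (Fin n₁ ⊕ Fin n₂ × Fin n₁) (Fin n₁ ⊕ Fin n₂ × Fin n₁) ℝ)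
        - coronaLap A₁ A₂).det * (t - r₁ - (r₂ - r₃)) ^ n₁
      = ((t - r₁) • (1 : Matrix (Fin n₂) (Fin n₂) ℝ) - lap A₂).det ^ n₁ *
        ∏ i, ((t - r₁ * n₂ - hL₁.eigenvalues i) * (t - r₁ - (r₂ - r₃))
            - (n₂ : ℝ) * (r₁ - hL₁.eigenvalues i) ^ 2) := by
  set N := (t - r₁) • (1 : Matrix (Fin n₂) (Fin n₂) ℝ) - lap A₂
  set s := t - r₁ - (r₂ - r₃)
  have hrow : N *ᵥ 1 = s • 1 := by
    rw [sub_mulVec, lap_mulVec_one hreg₂ hnet₂, smul_mulVec, one_mulVec, ← sub_smul]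
  have hsum : s * ∑ a, ∑ b, N⁻¹ a b = n₂ := by
    simpa using mul_sum_inv_eq_card hinv hrow
  have hpow : s ^ n₁ = s ^ Fintype.card (Fin n₁) := by rw [Fintype.card_fin]
  rw [smul_one_sub_coronaLap A₁ A₂ hreg₁, det_fromBlocks_of_snd_kronecker_one _ _ _ hinv,
    Fintype.card_fin, mul_assoc, hpow, mul_comm (det _), ← det_smul, smul_sub, smul_smul, hsum,
    det_smul_sub_smul_mul_self_of_regular hreg₁ hL₁]

/-- Let `S₁` be an `r₁`-regular signed graph whose Laplacian `L₁` has eigenvalues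
`λ₁, …, λ_{n₁}` (with multiplicity), and let `S₂` be an `r₂`-regular, `r₃`-net regular signed
graph.  For every real `t` with `(t − r₁)I − L₂` invertible, the Laplacian `L` of `S₁ ⋆ₛ S₂`
satisfies `det(tI − L)·(t − r₁ − (r₂ − r₃))^{n₁}
  = det((t − r₁)I − L₂)^{n₁} · ∏ᵢ ((t − r₁n₂ − λᵢ)(t − r₁ − (r₂ − r₃)) − n₂(r₁ − λᵢ)²)`. -/
theorem det_corona_lap_regular {n₁ n₂ : ℕ}
    (A₁ : Matrix (Fin n₁) (Fin n₁) ℝ) (A₂ : Matrix (Fin n₂) (Fin n₂) ℝ)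
    (h₁ : IsSignedAdj A₁) (h₂ : IsSignedAdj A₂)
    (r₁ r₂ r₃ : ℝ)
    (hreg₁ : ∀ i, ∑ j, |A₁ i j| = r₁)
    (hreg₂ : ∀ i, ∑ j, |A₂ i j| = r₂)
    (hnet₂ : ∀ i, ∑ j, A₂ i j = r₃)
    (hL₁ : (lap A₁).IsHermitian)
    (t : ℝ) (hinv : IsUnit ((t - r₁) • (1 : Matrix (Fin n₂) (Fin n₂) ℝ) - lap A₂).det) :
    (t • (1 : Matrix (Fin n₁ ⊕ Fin n₂ × Fin n₁) (Fin n₁ ⊕ Fin n₂ × Fin n₁) ℝ)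
        - coronaLap A₁ A₂).det * (t - r₁ - (r₂ - r₃)) ^ n₁
      = ((t - r₁) • (1 : Matrix (Fin n₂) (Fin n₂) ℝ) - lap A₂).det ^ n₁ *
        ∏ i, ((t - r₁ * n₂ - hL₁.eigenvalues i) * (t - r₁ - (r₂ - r₃))
            - (n₂ : ℝ) * (r₁ - hL₁.eigenvalues i) ^ 2) :=
  det_corona_lap_regular_general A₁ A₂ r₁ r₂ r₃ hreg₁ hreg₂ hnet₂ hL₁ t hinv
end

section
/- Let S₁ be an r₁-regular signed graph with adjacency matrix A₁ (n₁×n₁) and let S₂ be a signed graph with adjacency matrix A₂ (n₂×n₂) and Laplacian L₂, and let L be the Laplacian of S₁ ⋆ₛ S₂, indexed by Fin n₁ ⊕ (Fin n₂ × Fin n₁). Suppose v ∈ ℝ^{n₂} satisfies L₂v = λv and j_{n₂}ᵀv = 0. Then for every w ∈ ℝ^{n₁}, the vector x defined by x(inl i) = 0 and x(inr (k,j)) = v_k·w_j satisfies L·x = (λ + r₁)·x; in particular, if v ≠ 0 and w ≠ 0, then λ + r₁ is an eigenvalue of L, and its eigenspace has dimension at least n₁·(dimension of {v : L₂v = λv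 and j_{n₂}ᵀv = 0}). -/
open Matrix BigOperators Kronecker

lemma corona_key {n₁ n₂ : ℕ}
    (A₁ : Matrix (Fin n₁) (Fin n₁) ℝ) (A₂ : Matrix (Fin n₂) (Fin n₂) ℝ)
    (r₁ : ℝ) (hreg₁ : ∀ i, ∑ j, |A₁ i j| = r₁)
    (lam : ℝ) (u : Fin n₁ → Fin n₂ → ℝ)
    (hu : ∀ j, (lap A₂).mulVec (u j) = lam • u j)
    (hsum : ∀ j, ∑ k, u j k = 0) :
    (coronaLap A₁ A₂).mulVec
        (Sum.elim (fun _ : Fin n₁ => (0 : ℝ)) fun p : Fin n₂ × Fin n₁ => u p.2 p.1)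
      = (lam + r₁) • Sum.elim (fun _ : Fin n₁ => (0 : ℝ)) fun p : Fin n₂ × Fin n₁ => u p.2 p.1 := by
  funext i
  cases i with
  | inl i =>
    simp only [coronaLap, mulVec, dotProduct, Fintype.sum_sum_type, fromBlocks_apply₁₁,
      fromBlocks_apply₁₂, Sum.elim_inl, Sum.elim_inr, mul_zero, Finset.sum_const_zero,
      zero_add, Pi.smul_apply, smul_eq_mul, of_apply]
    rw [Fintype.sum_prod_type, Finset.sum_comm]
    have : ∀ j : Fin n₁, ∑ k : Fin n₂, -A₁ i j * u j k = 0 := by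
      intro j
      rw [← Finset.mul_sum, hsum j, mul_zero]
    simp only [this, Finset.sum_const_zero, mul_zero]
  | inr p =>
    obtain ⟨k, j⟩ := p
    have hD : degMat A₁ j j = r₁ := by simp [degMat, hreg₁]
    have hL : ∑ k', lap A₂ k k' * u j k' = lam * u j k := by
      have := congrFun (hu j) k
      simpa [mulVec, dotProduct] using this
    simp only [coronaLap, mulVec, dotProduct, Fintype.sum_sum_type, fromBlocks_apply₂₁,
      fromBlocks_apply₂₂, Sum.elim_inl, Sum.elim_inr, mul_zero, Finset.sum_const_zero,
      zero_add, Pi.smul_apply, smul_eq_mul, of_apply, Matrix.add_apply, kroneckerMap_apply]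
    rw [Fintype.sum_prod_type]
    simp only [add_mul, Finset.sum_add_distrib]
    congr 1
    · have : ∀ k' : Fin n₂, ∑ j' : Fin n₁, lap A₂ k k' * (1 : Matrix (Fin n₁) (Fin n₁) ℝ) j j' * u j' k'
          = lap A₂ k k' * u j k' := by
        intro k'
        simp [Matrix.one_apply, mul_comm, Finset.sum_ite_eq, mul_ite]
      rw [Finset.sum_congr rfl fun k' _ => this k', hL]
    · have : ∀ k' : Fin n₂, ∑ j' : Fin n₁, (1 : Matrix (Fin n₂) (Fin n₂) ℝ) k k' * degMat A₁ j j' * u j' k'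
          = (1 : Matrix (Fin n₂) (Fin n₂) ℝ) k k' * (r₁ * u j k') := by
        intro k'
        simp [degMat, Matrix.diagonal_apply, mul_ite, Finset.sum_ite_eq, hreg₁, mul_assoc]
      rw [Finset.sum_congr rfl fun k' _ => this k']
      simp [Matrix.one_apply, Finset.sum_ite_eq, mul_comm]


/-- Let `S₁` be `r₁`-regular.  If `L₂ v = λ v` and `jᵀ v = 0`, then for every `w` the vector
`x` with `x(inl i) = 0` and `x(inr (k,j)) = v_k w_j` satisfies `L x = (λ + r₁) x`, where `L`
is the Laplacian of `S₁ ⋆ₛ S₂`; in particular, if `v ≠ 0` and `w ≠ 0` then `λ + r₁` is an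
eigenvalue of `L` and its eigenspace has dimension at least
`n₁ · dim {v : L₂ v = λ v, jᵀ v = 0}`. -/
theorem corona_lap_eigenvector {n₁ n₂ : ℕ}
    (A₁ : Matrix (Fin n₁) (Fin n₁) ℝ) (A₂ : Matrix (Fin n₂) (Fin n₂) ℝ)
    (h₁ : IsSignedAdj A₁) (h₂ : IsSignedAdj A₂)
    (r₁ : ℝ) (hreg₁ : ∀ i, ∑ j, |A₁ i j| = r₁)
    (lam : ℝ) (v : Fin n₂ → ℝ)
    (hv : (lap A₂).mulVec v = lam • v) (hsum : ∑ k, v k = 0) :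
    (∀ w : Fin n₁ → ℝ,
        (coronaLap A₁ A₂).mulVec
            (Sum.elim (fun _ : Fin n₁ => (0 : ℝ)) fun p : Fin n₂ × Fin n₁ => v p.1 * w p.2)
          = (lam + r₁) •
              Sum.elim (fun _ : Fin n₁ => (0 : ℝ)) fun p : Fin n₂ × Fin n₁ => v p.1 * w p.2)
    ∧ (v ≠ 0 → ∀ w : Fin n₁ → ℝ, w ≠ 0 →
        Module.End.HasEigenvalue (Matrix.toLin' (coronaLap A₁ A₂)) (lam + r₁)
        ∧ ∀ W : Submodule ℝ (Fin n₂ → ℝ),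
            (∀ u, u ∈ W ↔ (lap A₂).mulVec u = lam • u ∧ ∑ k, u k = 0) →
            n₁ * Module.finrank ℝ W ≤
              Module.finrank ℝ
                (Module.End.eigenspace (Matrix.toLin' (coronaLap A₁ A₂)) (lam + r₁))) := by
  have key : ∀ w : Fin n₁ → ℝ,
      (coronaLap A₁ A₂).mulVec
          (Sum.elim (fun _ : Fin n₁ => (0 : ℝ)) fun p : Fin n₂ × Fin n₁ => v p.1 * w p.2)
        = (lam + r₁) •
            Sum.elim (fun _ : Fin n₁ => (0 : ℝ)) fun p : Fin n₂ × Fin n₁ => v p.1 * w p.2 := by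
    intro w
    have := corona_key A₁ A₂ r₁ hreg₁ lam (fun j => w j • v)
      (fun j => by rw [Matrix.mulVec_smul, hv, smul_comm]) (fun j => by simp [← Finset.mul_sum, hsum])
    simpa [mul_comm, smul_eq_mul] using this
  refine ⟨key, fun hv0 w hw0 => ?_⟩
  set L := Matrix.toLin' (coronaLap A₁ A₂) with hLdef
  set x : Fin n₁ ⊕ Fin n₂ × Fin n₁ → ℝ :=
    Sum.elim (fun _ : Fin n₁ => (0 : ℝ)) (fun p : Fin n₂ × Fin n₁ => v p.1 * w p.2) with hxdef
  have hxne : x ≠ 0 := by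
    obtain ⟨k, hk⟩ := Function.ne_iff.mp hv0
    obtain ⟨j, hj⟩ := Function.ne_iff.mp hw0
    intro h
    have : x (Sum.inr (k, j)) = 0 := by rw [h]; rfl
    simp only [hxdef, Sum.elim_inr] at this
    exact (mul_ne_zero hk hj) this
  have heig : Module.End.HasEigenvector L (lam + r₁) x := by
    refine ⟨?_, hxne⟩
    rw [Module.End.mem_eigenspace_iff, hLdef, Matrix.toLin'_apply]
    exact key w
  refine ⟨Module.End.hasEigenvalue_of_hasEigenvector heig, ?_⟩
  intro W hW
  set E := Module.End.eigenspace L (lam + r₁) with hE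
  -- the linear injection
  let Φ : (Fin n₁ → W) →ₗ[ℝ] E :=
    { toFun := fun f =>
        ⟨Sum.elim (fun _ : Fin n₁ => (0 : ℝ)) fun p : Fin n₂ × Fin n₁ => (f p.2 : Fin n₂ → ℝ) p.1, by
          rw [hE, Module.End.mem_eigenspace_iff, hLdef, Matrix.toLin'_apply]
          exact corona_key A₁ A₂ r₁ hreg₁ lam (fun j => (f j : Fin n₂ → ℝ))
            (fun j => ((hW _).mp (f j).2).1) (fun j => ((hW _).mp (f j).2).2)⟩
      map_add' := by
        intro f g
        ext i
        cases i <;> simp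
      map_smul' := by
        intro c f
        ext i
        cases i <;> simp }
  have hinj : Function.Injective Φ := by
    intro f g hfg
    funext j
    ext k
    have := congrArg (fun y : E => (y : Fin n₁ ⊕ Fin n₂ × Fin n₁ → ℝ) (Sum.inr (k, j))) hfg
    simpa [Φ] using this
  have h1 : Module.finrank ℝ (Fin n₁ → W) ≤ Module.finrank ℝ E :=
    LinearMap.finrank_le_finrank_of_injective hinj
  have h2 : Module.finrank ℝ (Fin n₁ → W) = n₁ * Module.finrank ℝ W := by
    rw [Module.finrank_pi_fintype]
    simp [Finset.sum_const, mul_comm]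
  rw [← h2]
  exact h1
end

section
/- Let S₁ be an r₁-regular signed graph with adjacency matrix A₁ (n₁×n₁) and let S₂ be an r₂-regular, r₃-net regular signed graph with adjacency matrix A₂ (n₂×n₂), and let L be the Laplacian of S₁ ⋆ₛ S₂. Then for every eigenvalue λ of the Laplacian L₁ of S₁, the two real numbers (β ± √(β² + 4(n₂(λ − r₁)² − (λ + r₁n₂)(r₁ + r₂ − r₃))))/2, where β = r₁ + r₂ − r₃ + λ + r₁n₂ (the discriminant equals (r₁n₂ + λ − r₁ − r₂ + r₃)² + 4n₂(r₁ − λ)² and is nonnegative), are eigenvalues of L. -/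
open Matrix BigOperators Kronecker

lemma mem_spectrum_of_eigvec {n : Type*} [Fintype n] [DecidableEq n]
    (M : Matrix n n ℝ) (μ : ℝ) (x : n → ℝ) (hx : x ≠ 0)
    (h : M.mulVec x = μ • x) : μ ∈ spectrum ℝ M := by
  rw [← AlgEquiv.spectrum_eq Matrix.toLinAlgEquiv' M]
  exact Module.End.hasEigenvalue_iff_mem_spectrum.mp
    (Module.End.hasEigenvalue_of_hasEigenvector
      ⟨Module.End.mem_eigenspace_iff.mpr (by simpa using h), hx⟩)

lemma exists_eigvec_of_mem_spectrum {n : Type*} [Fintype n] [DecidableEq n]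
    (M : Matrix n n ℝ) (μ : ℝ) (h : μ ∈ spectrum ℝ M) :
    ∃ x : n → ℝ, x ≠ 0 ∧ M.mulVec x = μ • x := by
  rw [← AlgEquiv.spectrum_eq Matrix.toLinAlgEquiv' M] at h
  obtain ⟨x, hx⟩ := (Module.End.hasEigenvalue_iff_mem_spectrum.mpr h).exists_hasEigenvector
  exact ⟨x, hx.2, by simpa using Module.End.mem_eigenspace_iff.mp hx.1⟩

/-- Key lemma: if `(a, b)` is a nonzero eigenvector of the quotient 2×2 matrix for eigenvalue
`μ`, then `μ` is an eigenvalue of the corona Laplacian. -/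
lemma corona_eig {n₁ n₂ : ℕ}
    (A₁ : Matrix (Fin n₁) (Fin n₁) ℝ) (A₂ : Matrix (Fin n₂) (Fin n₂) ℝ)
    (hn₂ : 1 ≤ n₂) (r₁ r₂ r₃ : ℝ)
    (hreg₁ : ∀ i, ∑ j, |A₁ i j| = r₁)
    (hreg₂ : ∀ i, ∑ j, |A₂ i j| = r₂)
    (hnet₂ : ∀ i, ∑ j, A₂ i j = r₃)
    (lam : ℝ) (v : Fin n₁ → ℝ) (hv : v ≠ 0)
    (hev : (lap A₁).mulVec v = lam • v)
    (μ a b : ℝ) (hab : a ≠ 0 ∨ b ≠ 0)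
    (e1 : μ * a = (lam + r₁ * n₂) * a - n₂ * (r₁ - lam) * b)
    (e2 : μ * b = -(r₁ - lam) * a + (r₁ + r₂ - r₃) * b) :
    μ ∈ spectrum ℝ (coronaLap A₁ A₂) := by
  have hA1v : A₁.mulVec v = fun i => (r₁ - lam) * v i := by
    have h := hev
    rw [lap, Matrix.sub_mulVec] at h
    funext i
    have hd : (degMat A₁).mulVec v i = r₁ * v i := by
      simp [degMat, Matrix.mulVec_diagonal, hreg₁ i]
    have := congrFun h i
    simp only [Pi.sub_apply, Pi.smul_apply, smul_eq_mul] at this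
    rw [hd] at this
    linarith
  -- eigenvector of the corona Laplacian
  set x : Fin n₁ ⊕ Fin n₂ × Fin n₁ → ℝ :=
    Sum.elim (fun i => a * v i) (fun p => b * v p.2) with hx
  obtain ⟨i₀, hi₀⟩ := Function.ne_iff.mp hv
  have hxne : x ≠ 0 := by
    rcases hab with ha | hb
    · intro h0
      exact ha (by
        have := congrFun h0 (Sum.inl i₀)
        simp [hx] at this
        exact this.resolve_right hi₀)
    · intro h0
      exact hb (by
        have := congrFun h0 (Sum.inr (⟨0, hn₂⟩, i₀))
        simp [hx] at this
        exact this.resolve_right hi₀)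
  apply mem_spectrum_of_eigvec _ _ x hxne
  funext s
  rcases s with i | ⟨k, i⟩
  · -- first block row
    have hrow : (coronaLap A₁ A₂).mulVec x (Sum.inl i)
        = (lam + n₂ * r₁) * (a * v i) + (∑ p : Fin n₂ × Fin n₁, -(A₁ i p.2) * (b * v p.2)) := by
      simp only [coronaLap, hx, Matrix.mulVec, dotProduct, Fintype.sum_sum_type,
        Matrix.fromBlocks_apply₁₁, Matrix.fromBlocks_apply₁₂, Sum.elim_inl, Sum.elim_inr,
        Matrix.add_apply, Matrix.smul_apply, smul_eq_mul, Matrix.of_apply]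
      congr 1
      have h1 : ∑ j, (lap A₁ i j + (n₂ : ℝ) * degMat A₁ i j) * (a * v j)
          = a * ((lap A₁).mulVec v i) + (n₂ : ℝ) * a * ((degMat A₁).mulVec v i) := by
        simp only [Matrix.mulVec, dotProduct, Finset.mul_sum]
        rw [← Finset.sum_add_distrib]
        congr 1; funext j; ring
      rw [h1, hev]
      have hd : (degMat A₁).mulVec v i = r₁ * v i := by
        simp [degMat, Matrix.mulVec_diagonal, hreg₁ i]
      rw [hd]
      simp only [Pi.smul_apply, smul_eq_mul]
      ring
    rw [hrow]
    have hsum : (∑ p : Fin n₂ × Fin n₁, -(A₁ i p.2) * (b * v p.2))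
        = -(b * (n₂ * ((r₁ - lam) * v i))) := by
      rw [Fintype.sum_prod_type]
      have : ∀ k : Fin n₂, ∑ j, -(A₁ i j) * (b * v j) = -(b * ((r₁ - lam) * v i)) := by
        intro k
        have := congrFun hA1v i
        simp only [Matrix.mulVec, dotProduct] at this
        calc ∑ j, -(A₁ i j) * (b * v j) = -(b * ∑ j, A₁ i j * v j) := by
              rw [Finset.mul_sum, ← Finset.sum_neg_distrib]; congr 1; funext j; ring
          _ = -(b * ((r₁ - lam) * v i)) := by rw [this]
      rw [Finset.sum_congr rfl (fun k _ => this k), Finset.sum_const, Finset.card_univ,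
        Fintype.card_fin, nsmul_eq_mul]
      ring
    rw [hsum]
    simp only [hx, Pi.smul_apply, Sum.elim_inl, smul_eq_mul]
    linear_combination -(v i) * e1
  · -- second block row
    have hrow : (coronaLap A₁ A₂).mulVec x (Sum.inr (k, i))
        = (∑ j, -(A₁ i j) * (a * v j))
          + ∑ q : Fin n₂ × Fin n₁,
              ((lap A₂ k q.1 * (1 : Matrix (Fin n₁) (Fin n₁) ℝ) i q.2
                + (1 : Matrix (Fin n₂) (Fin n₂) ℝ) k q.1 * degMat A₁ i q.2) * (b * v q.2)) := by
      simp only [coronaLap, hx, Matrix.mulVec, dotProduct, Fintype.sum_sum_type,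
        Matrix.fromBlocks_apply₂₁, Matrix.fromBlocks_apply₂₂, Sum.elim_inl, Sum.elim_inr,
        Matrix.add_apply, Matrix.of_apply, Matrix.kroneckerMap_apply, smul_eq_mul]
    rw [hrow]
    have h21 : (∑ j, -(A₁ i j) * (a * v j)) = -((r₁ - lam) * a * v i) := by
      have := congrFun hA1v i
      simp only [Matrix.mulVec, dotProduct] at this
      calc ∑ j, -(A₁ i j) * (a * v j) = -(a * ∑ j, A₁ i j * v j) := by
            rw [Finset.mul_sum, ← Finset.sum_neg_distrib]; congr 1; funext j; ring
        _ = _ := by rw [this]; ring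
    have h22 : ∑ q : Fin n₂ × Fin n₁,
        ((lap A₂ k q.1 * (1 : Matrix (Fin n₁) (Fin n₁) ℝ) i q.2
          + (1 : Matrix (Fin n₂) (Fin n₂) ℝ) k q.1 * degMat A₁ i q.2) * (b * v q.2))
        = (r₂ - r₃) * (b * v i) + r₁ * (b * v i) := by
      rw [Fintype.sum_prod_type]
      simp only [add_mul, Finset.sum_add_distrib]
      congr 1
      · have : ∀ l : Fin n₂, ∑ j, lap A₂ k l * (1 : Matrix (Fin n₁) (Fin n₁) ℝ) i j * (b * v j)
            = lap A₂ k l * (b * v i) := by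
          intro l
          rw [Finset.sum_eq_single i]
          · simp [Matrix.one_apply]
          · intro j _ hj; simp [Matrix.one_apply, Ne.symm hj]
          · simp
        rw [Finset.sum_congr rfl (fun l _ => this l), ← Finset.sum_mul]
        have : ∑ l, lap A₂ k l = r₂ - r₃ := by
          simp only [lap, Matrix.sub_apply, Finset.sum_sub_distrib, hnet₂ k]
          have : ∑ l, degMat A₂ k l = r₂ := by
            rw [Finset.sum_eq_single k] <;>
              simp [degMat, Matrix.diagonal_apply, hreg₂ k] <;> intro j hj <;> simp [Ne.symm hj]
          rw [this]
        rw [this]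
      · have : ∀ l : Fin n₂, ∑ j, (1 : Matrix (Fin n₂) (Fin n₂) ℝ) k l * degMat A₁ i j * (b * v j)
            = (1 : Matrix (Fin n₂) (Fin n₂) ℝ) k l * (r₁ * (b * v i)) := by
          intro l
          rw [Finset.sum_eq_single i]
          · simp [degMat, Matrix.diagonal_apply, hreg₁ i]; ring
          · intro j _ hj; simp [degMat, Matrix.diagonal_apply, Ne.symm hj]
          · simp
        rw [Finset.sum_congr rfl (fun l _ => this l), ← Finset.sum_mul]
        have : ∑ l, (1 : Matrix (Fin n₂) (Fin n₂) ℝ) k l = 1 := by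
          rw [Finset.sum_eq_single k] <;> simp [Matrix.one_apply] <;> intro j hj <;> simp [Ne.symm hj]
        rw [this, one_mul]
    rw [h21, h22]
    simp only [hx, Pi.smul_apply, Sum.elim_inr, smul_eq_mul]
    linear_combination -(v i) * e2


lemma corona_eig_root {n₁ n₂ : ℕ}
    (A₁ : Matrix (Fin n₁) (Fin n₁) ℝ) (A₂ : Matrix (Fin n₂) (Fin n₂) ℝ)
    (hn₂ : 1 ≤ n₂) (r₁ r₂ r₃ : ℝ)
    (hreg₁ : ∀ i, ∑ j, |A₁ i j| = r₁)
    (hreg₂ : ∀ i, ∑ j, |A₂ i j| = r₂)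
    (hnet₂ : ∀ i, ∑ j, A₂ i j = r₃)
    (lam : ℝ) (v : Fin n₁ → ℝ) (hv : v ≠ 0)
    (hev : (lap A₁).mulVec v = lam • v)
    (μ : ℝ)
    (hq : μ ^ 2 - (lam + r₁ * n₂ + (r₁ + r₂ - r₃)) * μ
        + ((lam + r₁ * n₂) * (r₁ + r₂ - r₃) - n₂ * (r₁ - lam) ^ 2) = 0) :
    μ ∈ spectrum ℝ (coronaLap A₁ A₂) := by
  by_cases hrl : r₁ = lam
  · subst hrl
    have hfac : (μ - (r₁ + r₁ * n₂)) * (μ - (r₁ + r₂ - r₃)) = 0 := by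
      linear_combination hq
    rcases mul_eq_zero.mp hfac with h | h
    · exact corona_eig A₁ A₂ hn₂ r₁ r₂ r₃ hreg₁ hreg₂ hnet₂ r₁ v hv hev μ 1 0
        (Or.inl one_ne_zero) (by linear_combination h) (by ring)
    · exact corona_eig A₁ A₂ hn₂ r₁ r₂ r₃ hreg₁ hreg₂ hnet₂ r₁ v hv hev μ 0 1
        (Or.inr one_ne_zero) (by ring) (by linear_combination h)
  · refine corona_eig A₁ A₂ hn₂ r₁ r₂ r₃ hreg₁ hreg₂ hnet₂ lam v hv hev μ
      ((n₂ : ℝ) * (r₁ - lam)) (lam + r₁ * n₂ - μ) (Or.inl ?_) (by ring) (by linear_combination -hq)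
    have hn : (0 : ℝ) < (n₂ : ℝ) := by exact_mod_cast hn₂
    exact mul_ne_zero (ne_of_gt hn) (sub_ne_zero.mpr hrl)

/-- Let `S₁` be an `r₁`-regular signed graph and `S₂` an `r₂`-regular, `r₃`-net regular signed
graph on `n₂` vertices.  For every eigenvalue `λ` of `L₁`, the two real numbers
`(β ± √(β² + 4(n₂(λ − r₁)² − (λ + r₁n₂)(r₁ + r₂ − r₃))))/2`, where
`β = r₁ + r₂ − r₃ + λ + r₁n₂` (the discriminant equals
`(r₁n₂ + λ − r₁ − r₂ + r₃)² + 4n₂(r₁ − λ)²` and is nonnegative), are eigenvalues of the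
Laplacian `L` of `S₁ ⋆ₛ S₂`. -/
theorem corona_lap_eigenvalues_regular {n₁ n₂ : ℕ}
    (A₁ : Matrix (Fin n₁) (Fin n₁) ℝ) (A₂ : Matrix (Fin n₂) (Fin n₂) ℝ)
    (h₁ : IsSignedAdj A₁) (h₂ : IsSignedAdj A₂) (hn₂ : 1 ≤ n₂)
    (r₁ r₂ r₃ : ℝ)
    (hreg₁ : ∀ i, ∑ j, |A₁ i j| = r₁)
    (hreg₂ : ∀ i, ∑ j, |A₂ i j| = r₂)
    (hnet₂ : ∀ i, ∑ j, A₂ i j = r₃)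
    (lam : ℝ) (hlam : lam ∈ spectrum ℝ (lap A₁)) :
    (r₁ + r₂ - r₃ + lam + r₁ * n₂) ^ 2
        + 4 * ((n₂ : ℝ) * (lam - r₁) ^ 2 - (lam + r₁ * n₂) * (r₁ + r₂ - r₃))
      = (r₁ * n₂ + lam - r₁ - r₂ + r₃) ^ 2 + 4 * (n₂ : ℝ) * (r₁ - lam) ^ 2
    ∧ 0 ≤ (r₁ + r₂ - r₃ + lam + r₁ * n₂) ^ 2
        + 4 * ((n₂ : ℝ) * (lam - r₁) ^ 2 - (lam + r₁ * n₂) * (r₁ + r₂ - r₃))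
    ∧ ((r₁ + r₂ - r₃ + lam + r₁ * n₂)
        + Real.sqrt ((r₁ + r₂ - r₃ + lam + r₁ * n₂) ^ 2
            + 4 * ((n₂ : ℝ) * (lam - r₁) ^ 2 - (lam + r₁ * n₂) * (r₁ + r₂ - r₃)))) / 2
        ∈ spectrum ℝ (coronaLap A₁ A₂)
    ∧ ((r₁ + r₂ - r₃ + lam + r₁ * n₂)
        - Real.sqrt ((r₁ + r₂ - r₃ + lam + r₁ * n₂) ^ 2
            + 4 * ((n₂ : ℝ) * (lam - r₁) ^ 2 - (lam + r₁ * n₂) * (r₁ + r₂ - r₃)))) / 2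
        ∈ spectrum ℝ (coronaLap A₁ A₂) := by
  obtain ⟨v, hv, hev⟩ := exists_eigvec_of_mem_spectrum _ _ hlam
  set β : ℝ := r₁ + r₂ - r₃ + lam + r₁ * n₂ with hβ
  set D : ℝ := β ^ 2 + 4 * ((n₂ : ℝ) * (lam - r₁) ^ 2 - (lam + r₁ * n₂) * (r₁ + r₂ - r₃)) with hD
  have hDeq : D = (r₁ * n₂ + lam - r₁ - r₂ + r₃) ^ 2 + 4 * (n₂ : ℝ) * (r₁ - lam) ^ 2 := by
    rw [hD, hβ]; ring
  have hD0 : 0 ≤ D := by rw [hDeq]; positivity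
  have hs : Real.sqrt D ^ 2 = D := Real.sq_sqrt hD0
  refine ⟨hDeq, hD0,
    corona_eig_root A₁ A₂ hn₂ r₁ r₂ r₃ hreg₁ hreg₂ hnet₂ lam v hv hev _ ?_,
    corona_eig_root A₁ A₂ hn₂ r₁ r₂ r₃ hreg₁ hreg₂ hnet₂ lam v hv hev _ ?_⟩
  · linear_combination (hs + hD) / 4
  · linear_combination (hs + hD) / 4
end

section
/- Let S₁ be an r₁-regular signed graph with adjacency matrix A₁ (n₁×n₁) and let S₂ be a signed graph with adjacency matrix A₂ (n₂×n₂) all of whose entries are nonnegative (all edges positive, so every row sum of its Laplacian L₂ is zero), and let L be the Laplacian of S₁ ⋆ₛ S₂. Then for every eigenvalue λ of the Laplacian L₁ of S₁, the two real numbers ((n₂+1)r₁ + λ ± √(((n₂+1)r₁ + λ)² − 4λ((2n₂+1)r₁ − n₂λ)))/2 (whose discriminant equals (r₁n₂ + λ − r₁)² + 4n₂(r₁ − λ)² and is nonnegative) are eigenvalues of L. -/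
open Matrix BigOperators Kronecker

lemma mem_spectrum_of_mulVec_eq {m : Type*} [Fintype m] [DecidableEq m]
    (M : Matrix m m ℝ) {μ : ℝ} {v : m → ℝ} (hv : v ≠ 0)
    (h : M.mulVec v = μ • v) : μ ∈ spectrum ℝ M := by
  rw [spectrum.mem_iff, Matrix.isUnit_iff_isUnit_det, isUnit_iff_ne_zero, not_not,
    ← Matrix.exists_mulVec_eq_zero_iff]
  refine ⟨v, hv, ?_⟩
  rw [Algebra.algebraMap_eq_smul_one, Matrix.sub_mulVec, Matrix.smul_mulVec,
    Matrix.one_mulVec, h, sub_self]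

lemma exists_eigenvector_of_mem_spectrum {m : Type*} [Fintype m] [DecidableEq m]
    {M : Matrix m m ℝ} {μ : ℝ} (h : μ ∈ spectrum ℝ M) :
    ∃ v, v ≠ 0 ∧ M.mulVec v = μ • v := by
  rw [spectrum.mem_iff, Matrix.isUnit_iff_isUnit_det, isUnit_iff_ne_zero, not_not,
    ← Matrix.exists_mulVec_eq_zero_iff] at h
  obtain ⟨v, hv, hv0⟩ := h
  refine ⟨v, hv, ?_⟩
  rw [Algebra.algebraMap_eq_smul_one, Matrix.sub_mulVec, Matrix.smul_mulVec,
    Matrix.one_mulVec, sub_eq_zero] at hv0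
  exact hv0.symm

lemma sum_mul_smul {n : ℕ} (f g : Fin n → ℝ) (c t : ℝ) (h : ∑ j, f j * g j = t) :
    ∑ j, f j * (c * g j) = c * t := by
  rw [← h, Finset.mul_sum]; exact Finset.sum_congr rfl fun j _ => by ring

lemma corona_mem {n₁ n₂ : ℕ} (A₁ : Matrix (Fin n₁) (Fin n₁) ℝ) (A₂ : Matrix (Fin n₂) (Fin n₂) ℝ)
    (hn₂ : 1 ≤ n₂) (r₁ lam μ : ℝ)
    (hD : degMat A₁ = r₁ • (1 : Matrix (Fin n₁) (Fin n₁) ℝ))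
    (hL2 : ∀ k, ∑ l, lap A₂ k l = 0)
    (v : Fin n₁ → ℝ) (hv : v ≠ 0) (hAv : A₁.mulVec v = (r₁ - lam) • v)
    (hquad : (μ - lam - n₂*r₁) * (μ - r₁) = n₂ * (r₁ - lam)^2) :
    μ ∈ spectrum ℝ (coronaLap A₁ A₂) := by
  obtain ⟨a, b, hab, heq1, heq2⟩ :
      ∃ a b : ℝ, ¬(a = 0 ∧ b = 0) ∧
        a*(lam + n₂*r₁) - b*(n₂*(r₁-lam)) = μ*a ∧ -(a*(r₁-lam)) + b*r₁ = μ*b := by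
    by_cases h : μ - r₁ = 0 ∧ lam - r₁ = 0
    · refine ⟨0, 1, by simp, ?_, ?_⟩
      · have : r₁ - lam = 0 := by linarith [h.2]
        simp [this]
      · have : μ = r₁ := by linarith [h.1]
        simp [this]
    · exact ⟨μ - r₁, lam - r₁, h, by linear_combination -hquad, by ring⟩
  -- pointwise sum facts
  have S3 : ∀ i, ∑ j, A₁ i j * v j = (r₁ - lam) * v i := by
    intro i
    have := congrFun hAv i
    simpa [Matrix.mulVec, dotProduct] using this
  have S2 : ∀ i, ∑ j, degMat A₁ i j * v j = r₁ * v i := by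
    intro i
    rw [hD]
    simp [Matrix.smul_apply, Matrix.one_apply, mul_ite, ite_mul, mul_assoc]
  have S4 : ∀ i, ∑ j, (lap A₁ + (n₂:ℝ) • degMat A₁) i j * v j = (lam + n₂*r₁) * v i := by
    intro i
    have : ∀ j, (lap A₁ + (n₂:ℝ) • degMat A₁) i j * v j
        = (1 + (n₂:ℝ)) * (degMat A₁ i j * v j) - A₁ i j * v j := by
      intro j
      simp [lap, Matrix.add_apply, Matrix.sub_apply, Matrix.smul_apply]
      ring
    rw [Finset.sum_congr rfl fun j _ => this j, Finset.sum_sub_distrib, ← Finset.mul_sum,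
      S2 i, S3 i]
    ring
  -- the eigenvector
  set w : Fin n₁ ⊕ Fin n₂ × Fin n₁ → ℝ :=
    Sum.elim (fun i => a * v i) (fun p => b * v p.2) with hw
  obtain ⟨i₀, hi₀⟩ : ∃ i, v i ≠ 0 := by
    by_contra h
    push_neg at h
    exact hv (funext fun i => h i)
  have hwne : w ≠ 0 := by
    intro h0
    rcases not_and_or.mp hab with ha | hb
    · rcases eq_or_ne a 0 with rfl | ha'
      · -- a = 0, so b ≠ 0
        rcases not_and_or.mp hab with h' | hb'
        · exact h' rfl
        · have := congrFun h0 (Sum.inr (⟨0, hn₂⟩, i₀))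
          simp [hw] at this
          rcases this with h | h
          · exact hb' h
          · exact hi₀ h
      · have := congrFun h0 (Sum.inl i₀)
        simp [hw] at this
        rcases this with h | h
        · exact ha' h
        · exact hi₀ h
    · rcases eq_or_ne b 0 with rfl | hb'
      · exact hb rfl
      · have := congrFun h0 (Sum.inr (⟨0, hn₂⟩, i₀))
        simp [hw] at this
        rcases this with h | h
        · exact hb' h
        · exact hi₀ h
  apply mem_spectrum_of_mulVec_eq _ hwne
  funext x
  rcases x with i | ⟨k, i⟩
  · -- top block
    show ∑ z, coronaLap A₁ A₂ (Sum.inl i) z * w z = μ • w (Sum.inl i)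
    rw [Fintype.sum_sum_type]
    have h1 : ∑ j, coronaLap A₁ A₂ (Sum.inl i) (Sum.inl j) * w (Sum.inl j)
        = a * ((lam + n₂*r₁) * v i) := by
      simp only [coronaLap, Matrix.fromBlocks_apply₁₁, hw, Sum.elim_inl]
      exact sum_mul_smul _ _ a _ (S4 i)
    have h2 : ∑ p : Fin n₂ × Fin n₁, coronaLap A₁ A₂ (Sum.inl i) (Sum.inr p) * w (Sum.inr p)
        = -(n₂ * (b * ((r₁ - lam) * v i))) := by
      simp only [coronaLap, Matrix.fromBlocks_apply₁₂, hw, Sum.elim_inr, Matrix.of_apply]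
      rw [Fintype.sum_prod_type]
      have inner : ∀ k : Fin n₂, ∑ j, -A₁ i j * (b * v j) = -(b * ((r₁ - lam) * v i)) := by
        intro k
        rw [← sum_mul_smul (fun j => A₁ i j) v b _ (S3 i), ← Finset.sum_neg_distrib]
        exact Finset.sum_congr rfl fun j _ => by ring
      rw [Finset.sum_congr rfl fun k _ => inner k]
      simp [Finset.sum_const, Finset.card_univ]
    rw [h1, h2]
    simp only [hw, Sum.elim_inl, Pi.smul_apply, smul_eq_mul]
    linear_combination (v i) * heq1
  · -- bottom block
    show ∑ z, coronaLap A₁ A₂ (Sum.inr (k, i)) z * w z = μ • w (Sum.inr (k, i))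
    rw [Fintype.sum_sum_type]
    have h1 : ∑ j, coronaLap A₁ A₂ (Sum.inr (k, i)) (Sum.inl j) * w (Sum.inl j)
        = -(a * ((r₁ - lam) * v i)) := by
      simp only [coronaLap, Matrix.fromBlocks_apply₂₁, hw, Sum.elim_inl, Matrix.of_apply]
      rw [← sum_mul_smul (fun j => A₁ i j) v a _ (S3 i), ← Finset.sum_neg_distrib]
      exact Finset.sum_congr rfl fun j _ => by ring
    have h2 : ∑ p : Fin n₂ × Fin n₁, coronaLap A₁ A₂ (Sum.inr (k, i)) (Sum.inr p) * w (Sum.inr p)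
        = b * (r₁ * v i) := by
      simp only [coronaLap, Matrix.fromBlocks_apply₂₂, hw, Sum.elim_inr, Matrix.add_apply,
        Matrix.kroneckerMap_apply, Matrix.one_apply]
      rw [Fintype.sum_prod_type]
      have inner : ∀ l : Fin n₂,
          ∑ j, (lap A₂ k l * (if i = j then (1:ℝ) else 0)
            + (if k = l then (1:ℝ) else 0) * degMat A₁ i j) * (b * v j)
          = lap A₂ k l * (b * v i) + (if k = l then (1:ℝ) else 0) * (b * (r₁ * v i)) := by
        intro l
        have e1 : ∑ j, lap A₂ k l * (if i = j then (1:ℝ) else 0) * (b * v j)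
            = lap A₂ k l * (b * v i) := by
          rw [Finset.sum_eq_single i]
          · simp
          · intro j _ hj
            simp [Ne.symm hj]
          · simp
        have e2 : ∑ j, (if k = l then (1:ℝ) else 0) * degMat A₁ i j * (b * v j)
            = (if k = l then (1:ℝ) else 0) * (b * (r₁ * v i)) := by
          rw [Finset.sum_congr rfl (fun j _ => mul_assoc _ _ _), ← Finset.mul_sum,
            sum_mul_smul (fun j => degMat A₁ i j) v b _ (S2 i)]
        calc ∑ j, (lap A₂ k l * (if i = j then (1:ℝ) else 0)
              + (if k = l then (1:ℝ) else 0) * degMat A₁ i j) * (b * v j)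
            = (∑ j, lap A₂ k l * (if i = j then (1:ℝ) else 0) * (b * v j))
              + ∑ j, (if k = l then (1:ℝ) else 0) * degMat A₁ i j * (b * v j) := by
              rw [← Finset.sum_add_distrib]
              exact Finset.sum_congr rfl fun j _ => by ring
          _ = _ := by rw [e1, e2]
      rw [Finset.sum_congr rfl fun l _ => inner l, Finset.sum_add_distrib,
        ← Finset.sum_mul, hL2 k]
      simp [Finset.sum_ite_eq]
    rw [h1, h2]
    simp only [hw, Sum.elim_inr, Pi.smul_apply, smul_eq_mul]
    linear_combination (v i) * heq2

theorem corona_lap_eigenvalues_allPositive' {n₁ n₂ : ℕ}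
    (A₁ : Matrix (Fin n₁) (Fin n₁) ℝ) (A₂ : Matrix (Fin n₂) (Fin n₂) ℝ)
    (hn₂ : 1 ≤ n₂)
    (r₁ : ℝ) (hreg₁ : ∀ i, ∑ j, |A₁ i j| = r₁)
    (hpos : ∀ i j, 0 ≤ A₂ i j)
    (lam : ℝ) (hlam : lam ∈ spectrum ℝ (lap A₁)) :
    (((n₂ : ℝ) + 1) * r₁ + lam) ^ 2 - 4 * lam * ((2 * (n₂ : ℝ) + 1) * r₁ - (n₂ : ℝ) * lam)
      = (r₁ * n₂ + lam - r₁) ^ 2 + 4 * (n₂ : ℝ) * (r₁ - lam) ^ 2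
    ∧ 0 ≤ (((n₂ : ℝ) + 1) * r₁ + lam) ^ 2
        - 4 * lam * ((2 * (n₂ : ℝ) + 1) * r₁ - (n₂ : ℝ) * lam)
    ∧ ((((n₂ : ℝ) + 1) * r₁ + lam)
        + Real.sqrt ((((n₂ : ℝ) + 1) * r₁ + lam) ^ 2
            - 4 * lam * ((2 * (n₂ : ℝ) + 1) * r₁ - (n₂ : ℝ) * lam))) / 2
        ∈ spectrum ℝ (coronaLap A₁ A₂)
    ∧ ((((n₂ : ℝ) + 1) * r₁ + lam)
        - Real.sqrt ((((n₂ : ℝ) + 1) * r₁ + lam) ^ 2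
            - 4 * lam * ((2 * (n₂ : ℝ) + 1) * r₁ - (n₂ : ℝ) * lam))) / 2
        ∈ spectrum ℝ (coronaLap A₁ A₂) := by
  have hdisc : (((n₂ : ℝ) + 1) * r₁ + lam) ^ 2
      - 4 * lam * ((2 * (n₂ : ℝ) + 1) * r₁ - (n₂ : ℝ) * lam)
      = (r₁ * n₂ + lam - r₁) ^ 2 + 4 * (n₂ : ℝ) * (r₁ - lam) ^ 2 := by ring
  have hnonneg : 0 ≤ (((n₂ : ℝ) + 1) * r₁ + lam) ^ 2
      - 4 * lam * ((2 * (n₂ : ℝ) + 1) * r₁ - (n₂ : ℝ) * lam) := by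
    rw [hdisc]; positivity
  have hsq := Real.sq_sqrt hnonneg
  have hD : degMat A₁ = r₁ • (1 : Matrix (Fin n₁) (Fin n₁) ℝ) := by
    ext i j
    by_cases h : i = j
    · subst h
      simp [degMat, Matrix.diagonal_apply_eq, Matrix.one_apply_eq, hreg₁ i]
    · simp [degMat, Matrix.diagonal_apply_ne _ h, Matrix.one_apply_ne h]
  have hL2 : ∀ k, ∑ l, lap A₂ k l = 0 := by
    intro k
    have habs : ∀ j, |A₂ k j| = A₂ k j := fun j => abs_of_nonneg (hpos k j)
    simp only [lap, Matrix.sub_apply, Finset.sum_sub_distrib]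
    have : ∑ l, degMat A₂ k l = ∑ j, |A₂ k j| := by
      simp [degMat, Matrix.diagonal_apply, Finset.sum_ite_eq]
    rw [this]
    simp [habs]
  obtain ⟨v, hv, hLv⟩ := exists_eigenvector_of_mem_spectrum hlam
  have hAv : A₁.mulVec v = (r₁ - lam) • v := by
    have hA : A₁ = degMat A₁ - lap A₁ := by simp [lap]
    rw [hA, Matrix.sub_mulVec, hLv, hD, Matrix.smul_mulVec, Matrix.one_mulVec]
    funext i
    simp only [Pi.sub_apply, Pi.smul_apply, smul_eq_mul]
    ring
  refine ⟨hdisc, hnonneg, ?_, ?_⟩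
  · exact corona_mem A₁ A₂ hn₂ r₁ lam _ hD hL2 v hv hAv (by linear_combination hsq / 4)
  · exact corona_mem A₁ A₂ hn₂ r₁ lam _ hD hL2 v hv hAv (by linear_combination hsq / 4)

/-- Let `S₁` be an `r₁`-regular signed graph and let `S₂` be a signed graph on `n₂` vertices
all of whose entries are nonnegative (all edges positive).  For every eigenvalue `λ` of `L₁`,
the two real numbers `((n₂+1)r₁ + λ ± √(((n₂+1)r₁ + λ)² − 4λ((2n₂+1)r₁ − n₂λ)))/2`
(whose discriminant equals `(r₁n₂ + λ − r₁)² + 4n₂(r₁ − λ)²` and is nonnegative) are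
eigenvalues of the Laplacian `L` of `S₁ ⋆ₛ S₂`. -/
theorem corona_lap_eigenvalues_allPositive {n₁ n₂ : ℕ}
    (A₁ : Matrix (Fin n₁) (Fin n₁) ℝ) (A₂ : Matrix (Fin n₂) (Fin n₂) ℝ)
    (h₁ : IsSignedAdj A₁) (h₂ : IsSignedAdj A₂) (hn₂ : 1 ≤ n₂)
    (r₁ : ℝ) (hreg₁ : ∀ i, ∑ j, |A₁ i j| = r₁)
    (hpos : ∀ i j, 0 ≤ A₂ i j)
    (lam : ℝ) (hlam : lam ∈ spectrum ℝ (lap A₁)) :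
    (((n₂ : ℝ) + 1) * r₁ + lam) ^ 2 - 4 * lam * ((2 * (n₂ : ℝ) + 1) * r₁ - (n₂ : ℝ) * lam)
      = (r₁ * n₂ + lam - r₁) ^ 2 + 4 * (n₂ : ℝ) * (r₁ - lam) ^ 2
    ∧ 0 ≤ (((n₂ : ℝ) + 1) * r₁ + lam) ^ 2
        - 4 * lam * ((2 * (n₂ : ℝ) + 1) * r₁ - (n₂ : ℝ) * lam)
    ∧ ((((n₂ : ℝ) + 1) * r₁ + lam)
        + Real.sqrt ((((n₂ : ℝ) + 1) * r₁ + lam) ^ 2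
            - 4 * lam * ((2 * (n₂ : ℝ) + 1) * r₁ - (n₂ : ℝ) * lam))) / 2
        ∈ spectrum ℝ (coronaLap A₁ A₂)
    ∧ ((((n₂ : ℝ) + 1) * r₁ + lam)
        - Real.sqrt ((((n₂ : ℝ) + 1) * r₁ + lam) ^ 2
            - 4 * lam * ((2 * (n₂ : ℝ) + 1) * r₁ - (n₂ : ℝ) * lam))) / 2
        ∈ spectrum ℝ (coronaLap A₁ A₂) :=
  corona_lap_eigenvalues_allPositive' A₁ A₂ hn₂ r₁ hreg₁ hpos lam hlam
end

section
/- Let S₁, S₂ be signed graphs with adjacency matrices A₁ (n₁×n₁) and A₂ (n₂×n₂), with net-degree matrix D₁± = D±_{A₁} and net Laplacians N₁ = N_{A₁}, N₂ = N_{A₂}, and let N be the net Laplacian of S₁ ⋆ₛ S₂. For every real t such that the n₁n₂ × n₁n₂ matrix B(t) = (tI_{n₂} − N₂) ⊗ I_{n₁} − I_{n₂} ⊗ D₁± is invertible, det(tI_{n₁(n₂+1)} − N) = det(B(t)) · det(tI_{n₁} − N₁ − n₂D₁± − (j_{n₂}ᵀ ⊗ A₁)·B(t)⁻¹·(j_{n₂}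 ⊗ A₁)). -/
open Matrix BigOperators Kronecker

/-- The net-degree matrix of a signed graph: the diagonal matrix of row sums of `A`. -/
def netDegMat {n : ℕ} (A : Matrix (Fin n) (Fin n) ℝ) : Matrix (Fin n) (Fin n) ℝ :=
  Matrix.diagonal fun i => ∑ j, A i j

/-- The net Laplacian matrix `N_A = D±_A − A` of a signed graph. -/
def netLap {n : ℕ} (A : Matrix (Fin n) (Fin n) ℝ) : Matrix (Fin n) (Fin n) ℝ :=
  netDegMat A - A

/-- The net Laplacian matrix of the s-neighbourhood corona `S₁ ⋆ₛ S₂`: the block matrix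
`[[N₁ + n₂D₁±, −(jᵀ ⊗ A₁)], [−(jᵀ ⊗ A₁)ᵀ, N₂ ⊗ I + I ⊗ D₁±]]`. -/
def coronaNetLap {n₁ n₂ : ℕ} (A₁ : Matrix (Fin n₁) (Fin n₁) ℝ)
    (A₂ : Matrix (Fin n₂) (Fin n₂) ℝ) :
    Matrix (Fin n₁ ⊕ Fin n₂ × Fin n₁) (Fin n₁ ⊕ Fin n₂ × Fin n₁) ℝ :=
  Matrix.fromBlocks (netLap A₁ + (n₂ : ℝ) • netDegMat A₁)
    (Matrix.of fun i p => -(A₁ i p.2))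
    (Matrix.of fun p j => -(A₁ p.2 j))
    (netLap A₂ ⊗ₖ (1 : Matrix (Fin n₁) (Fin n₁) ℝ)
      + (1 : Matrix (Fin n₂) (Fin n₂) ℝ) ⊗ₖ netDegMat A₁)

/-- The matrix `B(t) = (tI − N₂) ⊗ I − I ⊗ D₁±`. -/
def netLapBmat {n₁ n₂ : ℕ} (A₁ : Matrix (Fin n₁) (Fin n₁) ℝ) (A₂ : Matrix (Fin n₂) (Fin n₂) ℝ)
    (t : ℝ) : Matrix (Fin n₂ × Fin n₁) (Fin n₂ × Fin n₁) ℝ :=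
  (t • (1 : Matrix (Fin n₂) (Fin n₂) ℝ) - netLap A₂) ⊗ₖ (1 : Matrix (Fin n₁) (Fin n₁) ℝ)
    - (1 : Matrix (Fin n₂) (Fin n₂) ℝ) ⊗ₖ netDegMat A₁

/-- For signed graphs `S₁, S₂` and any real `t` with `B(t) = (tI − N₂) ⊗ I − I ⊗ D₁±`
invertible, the net Laplacian `N` of `S₁ ⋆ₛ S₂` satisfies
`det(tI − N) = det(B(t)) · det(tI − N₁ − n₂D₁± − (jᵀ ⊗ A₁) B(t)⁻¹ (j ⊗ A₁))`. -/
theorem det_corona_netLap {n₁ n₂ : ℕ}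
    (A₁ : Matrix (Fin n₁) (Fin n₁) ℝ) (A₂ : Matrix (Fin n₂) (Fin n₂) ℝ)
    (h₁ : IsSignedAdj A₁) (h₂ : IsSignedAdj A₂) (t : ℝ)
    (hinv : IsUnit (netLapBmat A₁ A₂ t).det) :
    (t • (1 : Matrix (Fin n₁ ⊕ Fin n₂ × Fin n₁) (Fin n₁ ⊕ Fin n₂ × Fin n₁) ℝ)
        - coronaNetLap A₁ A₂).det
      = (netLapBmat A₁ A₂ t).det *
        (t • (1 : Matrix (Fin n₁) (Fin n₁) ℝ) - netLap A₁ - (n₂ : ℝ) • netDegMat A₁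
          - (Matrix.of fun i (p : Fin n₂ × Fin n₁) => A₁ i p.2) * (netLapBmat A₁ A₂ t)⁻¹ *
            (Matrix.of fun (p : Fin n₂ × Fin n₁) j => A₁ p.2 j)).det := by
  have hblk : (t • (1 : Matrix (Fin n₁ ⊕ Fin n₂ × Fin n₁) (Fin n₁ ⊕ Fin n₂ × Fin n₁) ℝ)
        - coronaNetLap A₁ A₂)
      = Matrix.fromBlocks
          (t • (1 : Matrix (Fin n₁) (Fin n₁) ℝ) - netLap A₁ - (n₂ : ℝ) • netDegMat A₁)
          (Matrix.of fun i (p : Fin n₂ × Fin n₁) => A₁ i p.2)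
          (Matrix.of fun (p : Fin n₂ × Fin n₁) j => A₁ p.2 j)
          (netLapBmat A₁ A₂ t) := by
    rw [coronaNetLap, ← Matrix.fromBlocks_one, Matrix.fromBlocks_smul,
      sub_eq_add_neg, Matrix.fromBlocks_neg, Matrix.fromBlocks_add]
    rw [Matrix.fromBlocks_inj]
    refine ⟨?_, ?_, ?_, ?_⟩
    · abel
    · ext i p; simp
    · ext p j; simp
    · rw [netLapBmat, sub_eq_add_neg (t • (1 : Matrix (Fin n₂) (Fin n₂) ℝ)),
        Matrix.add_kronecker, ← neg_one_smul ℝ (netLap A₂), Matrix.smul_kronecker, Matrix.smul_kronecker,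
        Matrix.one_kronecker_one]
      rw [neg_one_smul]
      abel
  haveI := Matrix.invertibleOfIsUnitDet _ hinv
  rw [hblk, Matrix.det_fromBlocks₂₂, Matrix.invOf_eq_nonsing_inv]
end

section
/- Let S₁ be an r-net regular signed graph with adjacency matrix A₁ (n₁×n₁) whose net Laplacian N₁ has eigenvalues ν₁,…,ν_{n₁} listed with multiplicity, and let S₂ be any signed graph with adjacency matrix A₂ (n₂×n₂) and net Laplacian N₂. Let N be the net Laplacian of S₁ ⋆ₛ S₂. Then for every real t such that (t − r)I_{n₂} − N₂ is invertible, det(tI_{n₁(n₂+1)} − N) · (t − r)^{n₁} = det((t − r)I_{n₂} − N₂)^{n₁} · ∏_{i=1}^{n₁} ((t − rn₂ − νᵢ)(t − r) − n₂(r − νᵢ)²). -/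
open Matrix BigOperators Kronecker

/-- The determinant of a quadratic polynomial in a Hermitian matrix is the product of the
quadratic polynomial evaluated at the eigenvalues. -/
lemma det_quad {n : ℕ} (N : Matrix (Fin n) (Fin n) ℝ) (hN : N.IsHermitian) (a b c : ℝ) :
    (a • (1 : Matrix (Fin n) (Fin n) ℝ) + b • N + c • (N * N)).det
      = ∏ i, (a + b * hN.eigenvalues i + c * hN.eigenvalues i ^ 2) := by
  set U : Matrix (Fin n) (Fin n) ℝ := (hN.eigenvectorUnitary : Matrix (Fin n) (Fin n) ℝ) with hU
  have hU1 : U * star U = 1 := (Matrix.mem_unitaryGroup_iff).mp hN.eigenvectorUnitary.2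
  have hU2 : star U * U = 1 := (Matrix.mem_unitaryGroup_iff').mp hN.eigenvectorUnitary.2
  set D : Matrix (Fin n) (Fin n) ℝ := diagonal hN.eigenvalues with hD
  have hspec : N = U * D * star U := by
    have := hN.spectral_theorem
    simpa using this
  have key : a • (1 : Matrix (Fin n) (Fin n) ℝ) + b • N + c • (N * N)
      = U * (diagonal fun i => a + b * hN.eigenvalues i + c * hN.eigenvalues i ^ 2) * star U := by
    have h1 : (1 : Matrix (Fin n) (Fin n) ℝ) = U * 1 * star U := by rw [mul_one, hU1]
    have hNN : N * N = U * (D * D) * star U := by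
      rw [hspec]
      calc U * D * star U * (U * D * star U) = U * (D * ((star U * U) * D)) * star U := by
            noncomm_ring
        _ = U * (D * D) * star U := by rw [hU2, one_mul]
    conv_lhs => rw [hNN, hspec, h1]
    have push : ∀ (E : Matrix (Fin n) (Fin n) ℝ) (x : ℝ),
        x • (U * E * star U) = U * (x • E) * star U := by
      intro E x; simp [Matrix.smul_mul, Matrix.mul_smul]
    have comb : ∀ (E F : Matrix (Fin n) (Fin n) ℝ),
        U * E * star U + U * F * star U = U * (E + F) * star U := by
      intro E F; rw [← Matrix.add_mul, ← Matrix.mul_add]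
    rw [push, push, push, comb, comb]
    have hdiag : a • (1 : Matrix (Fin n) (Fin n) ℝ) + b • D + c • (D * D)
        = diagonal fun i => a + b * hN.eigenvalues i + c * hN.eigenvalues i ^ 2 := by
      rw [hD, diagonal_mul_diagonal]
      ext i j
      rcases eq_or_ne i j with h | h
      · subst h
        simp [Matrix.diagonal_apply, Matrix.one_apply, sq]
      · simp [Matrix.diagonal_apply, Matrix.one_apply, h]
    rw [hdiag]
  rw [key, det_mul, det_mul]
  rw [mul_comm (U.det), mul_assoc, ← det_mul, hU1, det_one, mul_one, det_diagonal]

lemma fromBlocks_sub' {l m α : Type*} [Sub α] (A A' : Matrix l l α) (B B' : Matrix l m α)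
    (C C' : Matrix m l α) (D D' : Matrix m m α) :
    fromBlocks A B C D - fromBlocks A' B' C' D'
      = fromBlocks (A - A') (B - B') (C - C') (D - D') := by
  ext i j
  rcases i with i | i <;> rcases j with j | j <;> simp [fromBlocks]

lemma sub_kronecker' {l m n p : ℕ} (A B : Matrix (Fin l) (Fin m) ℝ)
    (C : Matrix (Fin n) (Fin p) ℝ) : (A - B) ⊗ₖ C = A ⊗ₖ C - B ⊗ₖ C := by
  ext i j
  simp [Matrix.kroneckerMap_apply, sub_mul]

lemma mid_product {n₁ n₂ : ℕ} (A₁ : Matrix (Fin n₁) (Fin n₁) ℝ)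
    (M : Matrix (Fin n₂) (Fin n₂) ℝ) :
    (Matrix.of fun (i : Fin n₁) (p : Fin n₂ × Fin n₁) => A₁ i p.2)
        * (M ⊗ₖ (1 : Matrix (Fin n₁) (Fin n₁) ℝ))
        * (Matrix.of fun (p : Fin n₂ × Fin n₁) (j : Fin n₁) => A₁ p.2 j)
      = (∑ k, ∑ l, M k l) • (A₁ * A₁) := by
  have h1 : (Matrix.of fun (i : Fin n₁) (p : Fin n₂ × Fin n₁) => A₁ i p.2)
        * (M ⊗ₖ (1 : Matrix (Fin n₁) (Fin n₁) ℝ))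
      = Matrix.of fun (i : Fin n₁) (p : Fin n₂ × Fin n₁) => (∑ k, M k p.1) * A₁ i p.2 := by
    ext i p
    simp only [Matrix.mul_apply, Matrix.of_apply, kroneckerMap_apply, Matrix.one_apply,
      Fintype.sum_prod_type, mul_ite, mul_one, mul_zero, Finset.sum_ite_eq, Finset.sum_ite_eq',
      Finset.mem_univ, if_true, Finset.sum_mul]
    exact Finset.sum_congr rfl fun k _ => mul_comm _ _
  rw [h1]
  ext i j
  simp only [Matrix.mul_apply, Matrix.of_apply, Matrix.smul_apply, smul_eq_mul,
    Fintype.sum_prod_type]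
  calc ∑ l, ∑ b, (∑ k, M k l) * A₁ i b * A₁ b j
      = ∑ l, (∑ k, M k l) * ∑ b, A₁ i b * A₁ b j := by
        refine Finset.sum_congr rfl fun l _ => ?_
        rw [Finset.mul_sum]
        exact Finset.sum_congr rfl fun b _ => (mul_assoc _ _ _)
    _ = (∑ l, ∑ k, M k l) * ∑ b, A₁ i b * A₁ b j := by rw [Finset.sum_mul]
    _ = (∑ k, ∑ l, M k l) * ∑ b, A₁ i b * A₁ b j := by rw [Finset.sum_comm]

/-- Let `S₁` be an `r`-net regular signed graph whose net Laplacian `N₁` has eigenvalues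
`ν₁, …, ν_{n₁}` (with multiplicity), and let `S₂` be any signed graph.  For every real `t`
with `(t − r)I − N₂` invertible, the net Laplacian `N` of `S₁ ⋆ₛ S₂` satisfies
`det(tI − N)·(t − r)^{n₁} = det((t − r)I − N₂)^{n₁} · ∏ᵢ ((t − rn₂ − νᵢ)(t − r) − n₂(r − νᵢ)²)`. -/
theorem det_corona_netLap_netRegular {n₁ n₂ : ℕ}
    (A₁ : Matrix (Fin n₁) (Fin n₁) ℝ) (A₂ : Matrix (Fin n₂) (Fin n₂) ℝ)
    (h₁ : IsSignedAdj A₁) (h₂ : IsSignedAdj A₂)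
    (r : ℝ) (hnet₁ : ∀ i, ∑ j, A₁ i j = r)
    (hN₁ : (netLap A₁).IsHermitian)
    (t : ℝ) (hinv : IsUnit ((t - r) • (1 : Matrix (Fin n₂) (Fin n₂) ℝ) - netLap A₂).det) :
    (t • (1 : Matrix (Fin n₁ ⊕ Fin n₂ × Fin n₁) (Fin n₁ ⊕ Fin n₂ × Fin n₁) ℝ)
        - coronaNetLap A₁ A₂).det * (t - r) ^ n₁
      = ((t - r) • (1 : Matrix (Fin n₂) (Fin n₂) ℝ) - netLap A₂).det ^ n₁ *
        ∏ i, ((t - r * n₂ - hN₁.eigenvalues i) * (t - r)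
            - (n₂ : ℝ) * (r - hN₁.eigenvalues i) ^ 2) := by
  set N₁ : Matrix (Fin n₁) (Fin n₁) ℝ := netLap A₁ with hN1def
  set N₂ : Matrix (Fin n₂) (Fin n₂) ℝ := netLap A₂ with hN2def
  set M : Matrix (Fin n₂) (Fin n₂) ℝ := (t - r) • 1 - N₂ with hMdef
  -- the net-degree matrix of `A₁` is `r • 1`
  have hD1 : netDegMat A₁ = r • (1 : Matrix (Fin n₁) (Fin n₁) ℝ) := by
    rw [netDegMat, smul_one_eq_diagonal]
    exact congrArg _ (funext hnet₁)
  -- row sums of `M`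
  have hrowM : ∀ i, ∑ j, M i j = t - r := by
    intro i
    simp [hMdef, hN2def, netLap, netDegMat, Matrix.sub_apply, Matrix.smul_apply,
      Matrix.one_apply, Finset.sum_sub_distrib, Matrix.diagonal_apply]
  have hMM : M⁻¹ * M = 1 := Matrix.nonsing_inv_mul M hinv
  set s : ℝ := ∑ k, ∑ l, M⁻¹ k l with hsdef
  -- `(t - r) * s = n₂`
  have hs : (t - r) * s = (n₂ : ℝ) := by
    have key : ∀ k, (t - r) * ∑ l, M⁻¹ k l = 1 := by
      intro k
      have h1 : M *ᵥ (fun _ => (1 : ℝ)) = fun _ => (t - r) := by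
        funext i
        simp [Matrix.mulVec, dotProduct]
        exact hrowM i
      have h2 : M⁻¹ *ᵥ (M *ᵥ (fun _ => (1 : ℝ))) = fun _ => (1 : ℝ) := by
        rw [Matrix.mulVec_mulVec, hMM, Matrix.one_mulVec]
      rw [h1] at h2
      have h3 := congrFun h2 k
      simp [Matrix.mulVec, dotProduct, ← Finset.sum_mul] at h3
      rw [mul_comm]
      exact h3
    rw [hsdef, Finset.mul_sum]
    simp [key]
  -- block decomposition of `tI - N`
  have hblock : t • (1 : Matrix (Fin n₁ ⊕ Fin n₂ × Fin n₁) (Fin n₁ ⊕ Fin n₂ × Fin n₁) ℝ)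
        - coronaNetLap A₁ A₂
      = fromBlocks ((t - n₂ * r) • 1 - N₁) (Matrix.of fun i p => A₁ i p.2)
          (Matrix.of fun p j => A₁ p.2 j) (M ⊗ₖ (1 : Matrix (Fin n₁) (Fin n₁) ℝ)) := by
    have e₁ : t • (1 : Matrix (Fin n₁) (Fin n₁) ℝ) - (netLap A₁ + (n₂ : ℝ) • netDegMat A₁)
        = (t - n₂ * r) • 1 - N₁ := by
      rw [hD1, ← hN1def]
      module
    have e₂ : t • (0 : Matrix (Fin n₁) (Fin n₂ × Fin n₁) ℝ)
          - (Matrix.of fun i p => -(A₁ i p.2))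
        = Matrix.of fun i p => A₁ i p.2 := by
      ext i p; simp
    have e₃ : t • (0 : Matrix (Fin n₂ × Fin n₁) (Fin n₁) ℝ)
          - (Matrix.of fun p j => -(A₁ p.2 j))
        = Matrix.of fun p j => A₁ p.2 j := by
      ext p j; simp
    have e₄ : t • (1 : Matrix (Fin n₂ × Fin n₁) (Fin n₂ × Fin n₁) ℝ)
          - (netLap A₂ ⊗ₖ (1 : Matrix (Fin n₁) (Fin n₁) ℝ)
            + (1 : Matrix (Fin n₂) (Fin n₂) ℝ) ⊗ₖ netDegMat A₁)
        = M ⊗ₖ (1 : Matrix (Fin n₁) (Fin n₁) ℝ) := by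
      rw [hD1, hMdef, sub_kronecker', smul_kronecker, kronecker_smul, one_kronecker_one,
        ← hN2def]
      module
    rw [coronaNetLap, ← fromBlocks_one, fromBlocks_smul, fromBlocks_sub', e₁, e₂, e₃, e₄]
  -- Schur complement
  have hdetK : (M ⊗ₖ (1 : Matrix (Fin n₁) (Fin n₁) ℝ)).det = M.det ^ n₁ := by
    rw [det_kronecker]
    simp
  haveI : Invertible (M ⊗ₖ (1 : Matrix (Fin n₁) (Fin n₁) ℝ)) :=
    Matrix.invertibleOfIsUnitDet _ (by rw [hdetK]; exact hinv.pow n₁)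
  rw [hblock, Matrix.det_fromBlocks₂₂, Matrix.invOf_eq_nonsing_inv, Matrix.inv_kronecker,
    inv_one, mid_product, hdetK, ← hsdef]
  -- it remains to compute `det((t - n₂r)I - N₁ - s A₁²) * (t - r)^n₁`
  have hA1 : A₁ = r • (1 : Matrix (Fin n₁) (Fin n₁) ℝ) - N₁ := by
    rw [hN1def, netLap, hD1]
    abel
  have hprod : A₁ * A₁ = (r * r) • (1 : Matrix (Fin n₁) (Fin n₁) ℝ) - (2 * r) • N₁
      + N₁ * N₁ := by
    rw [hA1, sub_mul, mul_sub, mul_sub]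
    simp only [Matrix.smul_mul, Matrix.mul_smul, Matrix.mul_one, Matrix.one_mul, smul_smul]
    module
  have hXe : (t - r) • (((t - n₂ * r) • (1 : Matrix (Fin n₁) (Fin n₁) ℝ) - N₁)
        - s • (A₁ * A₁))
      = ((t - r) * (t - n₂ * r) - n₂ * (r * r)) • (1 : Matrix (Fin n₁) (Fin n₁) ℝ)
        + (2 * n₂ * r - (t - r)) • N₁ + (-(n₂ : ℝ)) • (N₁ * N₁) := by
    have h5 : (t - r) • (s • (A₁ * A₁)) = (n₂ : ℝ) • (A₁ * A₁) := by
      rw [smul_smul, hs]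
    rw [smul_sub, h5, hprod]
    module
  calc M.det ^ n₁ * (((t - n₂ * r) • 1 - N₁) - s • (A₁ * A₁)).det * (t - r) ^ n₁
      = M.det ^ n₁ * ((t - r) ^ n₁ * (((t - n₂ * r) • 1 - N₁) - s • (A₁ * A₁)).det) := by
        ring
    _ = M.det ^ n₁ * ((t - r) • (((t - n₂ * r) • 1 - N₁) - s • (A₁ * A₁))).det := by
        rw [Matrix.det_smul, Fintype.card_fin]
    _ = M.det ^ n₁ * ∏ i, ((t - r * n₂ - hN₁.eigenvalues i) * (t - r)
          - (n₂ : ℝ) * (r - hN₁.eigenvalues i) ^ 2) := by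
        rw [hXe, det_quad _ hN₁]
        congr 1
        refine Finset.prod_congr rfl fun i _ => ?_
        ring
end

section
/- Let S₁ be an r-net regular signed graph with adjacency matrix A₁ (n₁×n₁) and let S₂ be any signed graph with adjacency matrix A₂ (n₂×n₂), and let N be the net Laplacian of S₁ ⋆ₛ S₂. Then for every eigenvalue ν of the net Laplacian N₁ of S₁, the two real numbers (ν + (n₂+1)r ± √((ν + (n₂+1)r)² − 4ν((2n₂+1)r − n₂ν)))/2 (whose discriminant equals (rn₂ + ν − r)² + 4n₂(r − ν)² and is nonnegative) are eigenvalues of N. -/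
open Matrix BigOperators Kronecker

lemma mem_spectrum_iff_ker {n : Type*} [Fintype n] [DecidableEq n] (M : Matrix n n ℝ) (μ : ℝ) :
    μ ∈ spectrum ℝ M ↔ ∃ v, v ≠ 0 ∧ M *ᵥ v = μ • v := by
  have key : ∀ v, (algebraMap ℝ (Matrix n n ℝ) μ - M) *ᵥ v = μ • v - M *ᵥ v := by
    intro v
    rw [Algebra.algebraMap_eq_smul_one, Matrix.sub_mulVec, Matrix.smul_mulVec,
      Matrix.one_mulVec]
  rw [spectrum.mem_iff, Matrix.isUnit_iff_isUnit_det, isUnit_iff_ne_zero, not_ne_iff,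
    ← Matrix.exists_mulVec_eq_zero_iff]
  constructor
  · rintro ⟨v, hv, h⟩
    exact ⟨v, hv, by rw [key, sub_eq_zero] at h; exact h.symm⟩
  · rintro ⟨v, hv, h⟩
    exact ⟨v, hv, by rw [key, h, sub_self]⟩

lemma corona_aux {n₁ n₂ : ℕ} (A₁ : Matrix (Fin n₁) (Fin n₁) ℝ) (A₂ : Matrix (Fin n₂) (Fin n₂) ℝ)
    (hn₂ : 1 ≤ n₂) (r ν μ : ℝ) (hnet₁ : ∀ i, ∑ j, A₁ i j = r)
    (x : Fin n₁ → ℝ) (hx : x ≠ 0) (hAx : A₁ *ᵥ x = (r - ν) • x)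
    (hQ : μ ^ 2 - (ν + ((n₂ : ℝ) + 1) * r) * μ
      + ν * ((2 * (n₂ : ℝ) + 1) * r - (n₂ : ℝ) * ν) = 0) :
    μ ∈ spectrum ℝ (coronaNetLap A₁ A₂) := by
  obtain ⟨a, b, hab, hC1, hC2⟩ : ∃ a b : ℝ, ¬(a = 0 ∧ b = 0) ∧
      a * (ν + (n₂ : ℝ) * r) - (n₂ : ℝ) * (r - ν) * b = μ * a ∧
      -(r - ν) * a + r * b = μ * b := by
    by_cases h : r = μ ∧ r = ν
    · exact ⟨0, 1, by simp, by rw [← h.2]; ring, by rw [← h.2, ← h.1]; ring⟩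
    · refine ⟨r - μ, r - ν, fun ⟨h1, h2⟩ => h ⟨by linarith, by linarith⟩,
        by linear_combination hQ, by ring⟩
  have hAx' : ∀ i, ∑ j, A₁ i j * x j = (r - ν) * x i := fun i => congrFun hAx i
  have hrow2 : ∀ k, ∑ l, netLap A₂ k l = 0 := by
    intro k
    simp [netLap, netDegMat, Matrix.sub_apply, Matrix.diagonal_apply,
      Finset.sum_sub_distrib, Finset.sum_ite_eq]
  set x₁ : Fin n₁ → ℝ := fun i => a * x i with hx₁
  set x₂ : Fin n₂ × Fin n₁ → ℝ := fun p => b * x p.2 with hx₂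
  rw [mem_spectrum_iff_ker]
  refine ⟨Sum.elim x₁ x₂, ?_, ?_⟩
  · obtain ⟨i, hi⟩ := Function.ne_iff.mp hx
    intro h0
    rcases not_and_or.mp hab with ha | hb
    · have h1 := congrFun h0 (Sum.inl i)
      simp only [Sum.elim_inl, hx₁, Pi.zero_apply, mul_eq_zero] at h1
      exact ha (h1.resolve_right hi)
    · have h1 := congrFun h0 (Sum.inr (⟨0, hn₂⟩, i))
      simp only [Sum.elim_inr, hx₂, Pi.zero_apply, mul_eq_zero] at h1
      exact hb (h1.resolve_right hi)
  · rw [coronaNetLap, fromBlocks_mulVec]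
    have hTL : ((netLap A₁ + (n₂ : ℝ) • netDegMat A₁) *ᵥ x₁)
        = fun i => a * ((ν + (n₂ : ℝ) * r) * x i) := by
      funext i
      simp only [mulVec, dotProduct, Matrix.add_apply, Matrix.smul_apply, netLap, netDegMat,
        Matrix.sub_apply, Matrix.diagonal_apply, smul_eq_mul, hnet₁, hx₁]
      have step : ∀ j, ((if i = j then r else 0) - A₁ i j
            + (n₂ : ℝ) * (if i = j then r else 0)) * (a * x j)
          = (if i = j then (1 + (n₂ : ℝ)) * r * (a * x i) else 0) - a * (A₁ i j * x j) := by
        intro j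
        split_ifs with h
        · subst h; ring
        · ring
      rw [Finset.sum_congr rfl fun j _ => step j, Finset.sum_sub_distrib,
        Finset.sum_ite_eq, ← Finset.mul_sum, hAx' i, if_pos (Finset.mem_univ i)]
      ring
    have hTR : ((Matrix.of fun i (p : Fin n₂ × Fin n₁) => -(A₁ i p.2)) *ᵥ x₂)
        = fun i => -((n₂ : ℝ) * (b * ((r - ν) * x i))) := by
      funext i
      simp only [mulVec, dotProduct, Matrix.of_apply, hx₂]
      rw [Fintype.sum_prod_type]
      have hk : ∀ k : Fin n₂, ∑ j, -A₁ i j * (b * x j) = -(b * ((r - ν) * x i)) := by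
        intro k
        rw [← hAx' i, Finset.mul_sum, ← Finset.sum_neg_distrib]
        exact Finset.sum_congr rfl fun j _ => by ring
      rw [Finset.sum_congr rfl fun k _ => hk k, Finset.sum_const, Finset.card_univ,
        Fintype.card_fin, nsmul_eq_mul]
      ring
    have hBL : ((Matrix.of fun (p : Fin n₂ × Fin n₁) j => -(A₁ p.2 j)) *ᵥ x₁)
        = fun p => -(a * ((r - ν) * x p.2)) := by
      funext p
      simp only [mulVec, dotProduct, Matrix.of_apply, hx₁]
      rw [← hAx' p.2, Finset.mul_sum, ← Finset.sum_neg_distrib]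
      exact Finset.sum_congr rfl fun j _ => by ring
    have hBR : ((netLap A₂ ⊗ₖ (1 : Matrix (Fin n₁) (Fin n₁) ℝ)
          + (1 : Matrix (Fin n₂) (Fin n₂) ℝ) ⊗ₖ netDegMat A₁) *ᵥ x₂)
        = fun p => r * (b * x p.2) := by
      funext p
      obtain ⟨k, i⟩ := p
      simp only [mulVec, dotProduct, Matrix.add_apply, kroneckerMap_apply, hx₂,
        netDegMat, Matrix.diagonal_apply, Matrix.one_apply, hnet₁]
      rw [Fintype.sum_prod_type]
      have step : ∀ l j, (netLap A₂ k l * (if i = j then (1:ℝ) else 0)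
            + (if k = l then (1:ℝ) else 0) * (if i = j then r else 0)) * (b * x j)
          = (if i = j then netLap A₂ k l * (b * x i) else 0)
            + (if k = l then (if i = j then r * (b * x i) else 0) else 0) := by
        intro l j
        by_cases h1 : i = j
        · subst h1
          by_cases h2 : k = l <;> simp [h2] <;> ring
        · simp [h1]
      have : ∀ l, ∑ j, (netLap A₂ k l * (if i = j then (1:ℝ) else 0)
            + (if k = l then (1:ℝ) else 0) * (if i = j then r else 0)) * (b * x j)
          = netLap A₂ k l * (b * x i) + (if k = l then r * (b * x i) else 0) := by
        intro l
        rw [Finset.sum_congr rfl fun j _ => step l j, Finset.sum_add_distrib,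
          Finset.sum_ite_eq, if_pos (Finset.mem_univ i)]
        congr 1
        split_ifs with h2
        · rw [Finset.sum_ite_eq, if_pos (Finset.mem_univ i)]
        · simp
      rw [Finset.sum_congr rfl fun l _ => this l, Finset.sum_add_distrib,
        ← Finset.sum_mul, hrow2 k, Finset.sum_ite_eq, if_pos (Finset.mem_univ k)]
      ring
    simp only [Sum.elim_comp_inl, Sum.elim_comp_inr]
    rw [hTL, hTR, hBL, hBR]
    funext u
    cases u with
    | inl i =>
      simp only [Sum.elim_inl, Pi.add_apply, Pi.smul_apply, smul_eq_mul, hx₁]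
      linear_combination x i * hC1
    | inr p =>
      simp only [Sum.elim_inr, Pi.add_apply, Pi.smul_apply, smul_eq_mul, hx₂]
      linear_combination x p.2 * hC2

/-- Let `S₁` be an `r`-net regular signed graph and `S₂` any signed graph on `n₂` vertices.
For every eigenvalue `ν` of `N₁`, the two real numbers
`(ν + (n₂+1)r ± √((ν + (n₂+1)r)² − 4ν((2n₂+1)r − n₂ν)))/2` (whose discriminant equals
`(rn₂ + ν − r)² + 4n₂(r − ν)²` and is nonnegative) are eigenvalues of the net Laplacian `N`
of `S₁ ⋆ₛ S₂`. -/
theorem corona_netLap_eigenvalues_netRegular {n₁ n₂ : ℕ}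
    (A₁ : Matrix (Fin n₁) (Fin n₁) ℝ) (A₂ : Matrix (Fin n₂) (Fin n₂) ℝ)
    (h₁ : IsSignedAdj A₁) (h₂ : IsSignedAdj A₂) (hn₂ : 1 ≤ n₂)
    (r : ℝ) (hnet₁ : ∀ i, ∑ j, A₁ i j = r)
    (ν : ℝ) (hν : ν ∈ spectrum ℝ (netLap A₁)) :
    (ν + ((n₂ : ℝ) + 1) * r) ^ 2 - 4 * ν * ((2 * (n₂ : ℝ) + 1) * r - (n₂ : ℝ) * ν)
      = (r * n₂ + ν - r) ^ 2 + 4 * (n₂ : ℝ) * (r - ν) ^ 2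
    ∧ 0 ≤ (ν + ((n₂ : ℝ) + 1) * r) ^ 2 - 4 * ν * ((2 * (n₂ : ℝ) + 1) * r - (n₂ : ℝ) * ν)
    ∧ ((ν + ((n₂ : ℝ) + 1) * r)
        + Real.sqrt ((ν + ((n₂ : ℝ) + 1) * r) ^ 2
            - 4 * ν * ((2 * (n₂ : ℝ) + 1) * r - (n₂ : ℝ) * ν))) / 2
        ∈ spectrum ℝ (coronaNetLap A₁ A₂)
    ∧ ((ν + ((n₂ : ℝ) + 1) * r)
        - Real.sqrt ((ν + ((n₂ : ℝ) + 1) * r) ^ 2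
            - 4 * ν * ((2 * (n₂ : ℝ) + 1) * r - (n₂ : ℝ) * ν))) / 2
        ∈ spectrum ℝ (coronaNetLap A₁ A₂) := by
  have hid : (ν + ((n₂ : ℝ) + 1) * r) ^ 2 - 4 * ν * ((2 * (n₂ : ℝ) + 1) * r - (n₂ : ℝ) * ν)
      = (r * n₂ + ν - r) ^ 2 + 4 * (n₂ : ℝ) * (r - ν) ^ 2 := by ring
  have hΔ : 0 ≤ (ν + ((n₂ : ℝ) + 1) * r) ^ 2
      - 4 * ν * ((2 * (n₂ : ℝ) + 1) * r - (n₂ : ℝ) * ν) := by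
    rw [hid]; positivity
  obtain ⟨x, hx, hN1x⟩ := (mem_spectrum_iff_ker (netLap A₁) ν).mp hν
  have hAx : A₁ *ᵥ x = (r - ν) • x := by
    funext i
    have h0 := congrFun hN1x i
    simp only [netLap, netDegMat, Matrix.sub_mulVec, Pi.sub_apply, Pi.smul_apply,
      smul_eq_mul] at h0 ⊢
    have hd : (Matrix.diagonal fun i => ∑ j, A₁ i j) *ᵥ x = fun i => r * x i := by
      funext i
      simp [Matrix.mulVec_diagonal, hnet₁]
    rw [hd] at h0
    linear_combination -h0
  have hs := Real.sq_sqrt hΔ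
  set s := Real.sqrt ((ν + ((n₂ : ℝ) + 1) * r) ^ 2
      - 4 * ν * ((2 * (n₂ : ℝ) + 1) * r - (n₂ : ℝ) * ν)) with hsd
  refine ⟨hid, hΔ, ?_, ?_⟩
  · exact corona_aux A₁ A₂ hn₂ r ν _ hnet₁ x hx hAx (by linear_combination (1/4 : ℝ) * hs)
  · exact corona_aux A₁ A₂ hn₂ r ν _ hnet₁ x hx hAx (by linear_combination (1/4 : ℝ) * hs)
end

section
/- Let S₁ be a signed graph with adjacency matrix A₁ (n₁×n₁) having exactly t₁ distinct (real) eigenvalues, and let S₂ be a net regular signed graph (all row sums of A₂ equal to some real r₂) with adjacency matrix A₂ (n₂×n₂) having exactly t₂ distinct eigenvalues. Then the adjacency matrix A of S₁ ⋆ₛ S₂ has at most 2t₁ + t₂ distinct eigenvalues; that is, the cardinality of the real spectrum of A is at most 2·(cardinality of the real spectrum of A₁) + (cardinality of the real spectrum of A₂). -/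
open Matrix BigOperators Kronecker

/-! Write an eigenvector of `coronaAdj A₁ A₂` for `λ` as `(x, y)`. If `x = 0`, some slice
`l ↦ y (l, i)` is an eigenvector of `A₂` for `λ`. Otherwise, summing the lower block equations over
the copies of `A₂` (whose column sums are `r₂`, by symmetry) gives `(λ - r₂) s = n₂ A₁ x` for
`s = ∑ₖ y (k, ·)`, while the upper block gives `A₁ s = λ x - A₁ x`; hence
`(n₂ A₁² + (λ - r₂) A₁ - λ (λ - r₂)) x = 0`. Since `A₁` is Hermitian, the spectral mapping theorem
gives `μ ∈ σ(A₁)` with `n₂ μ² + (λ - r₂) μ - λ (λ - r₂) = 0`, a monic quadratic in `λ`, which has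
at most two roots for each `μ`. -/

open Polynomial

theorem Matrix.mem_spectrum_iff_exists_mulVec_eq_smul {K m : Type*} [Field K] [Fintype m]
    [DecidableEq m] (M : Matrix m m K) (a : K) :
    a ∈ spectrum K M ↔ ∃ v, v ≠ 0 ∧ M *ᵥ v = a • v := by
  rw [← Matrix.spectrum_toLin', ← Module.End.hasEigenvalue_iff_mem_spectrum]
  simp only [Module.End.hasEigenvalue_iff, Submodule.ne_bot_iff, Module.End.mem_eigenspace_iff,
    toLin'_apply]
  simp_rw [and_comm]

theorem Matrix.IsHermitian.exists_mem_spectrum_eval_eq_zero {𝕜 m : Type*} [RCLike 𝕜] [Fintype m]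
    [DecidableEq m] {B : Matrix m m 𝕜} (hB : B.IsHermitian) (p : ℝ[X])
    (h : ¬IsUnit (aeval B p)) : ∃ μ ∈ spectrum ℝ B, p.eval μ = 0 := by
  rwa [← spectrum.zero_mem_iff ℝ, ← cfc_polynomial p B hB.isSelfAdjoint,
    cfc_map_spectrum _ _ hB.isSelfAdjoint] at h

theorem Matrix.sum_mulVec_of_sum_col_eq {R m n : Type*} [CommSemiring R] [Fintype m] [Fintype n]
    {A : Matrix m n R} {r : R} (hA : ∀ j, ∑ i, A i j = r) (v : n → R) :
    ∑ i, (A *ᵥ v) i = r * ∑ j, v j := by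
  simp only [mulVec, dotProduct]
  rw [Finset.sum_comm, Finset.mul_sum]
  simp only [← Finset.sum_mul, hA]

theorem setOf_exists_quadratic_eq_zero_subset_image (S : Set ℝ) (b c : ℝ → ℝ) :
    {x | ∃ μ ∈ S, x * x + b μ * x + c μ = 0} ⊆
      (fun p : ℝ × ℝ => (-b p.1 + p.2 * √(discrim 1 (b p.1) (c p.1))) / 2) '' S ×ˢ {1, -1} := by
  rintro x ⟨μ, hμ, hx⟩
  rw [← one_mul (x * x)] at hx
  have hD : discrim 1 (b μ) (c μ) = √(discrim 1 (b μ) (c μ)) * √(discrim 1 (b μ) (c μ)) :=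
    (Real.mul_self_sqrt (discrim_eq_sq_of_quadratic_eq_zero hx ▸ sq_nonneg _)).symm
  rcases (quadratic_eq_zero_iff one_ne_zero hD x).mp hx with rfl | rfl
  · exact ⟨(μ, 1), ⟨hμ, by simp⟩, by simp⟩
  · exact ⟨(μ, -1), ⟨hμ, by simp⟩, by ring⟩

theorem Set.Finite.setOf_exists_quadratic_eq_zero {S : Set ℝ} (hS : S.Finite) (b c : ℝ → ℝ) :
    {x | ∃ μ ∈ S, x * x + b μ * x + c μ = 0}.Finite :=
  ((hS.prod (Set.toFinite _)).image _).subset (setOf_exists_quadratic_eq_zero_subset_image S b c)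

theorem Set.Finite.ncard_setOf_exists_quadratic_eq_zero_le {S : Set ℝ} (hS : S.Finite)
    (b c : ℝ → ℝ) : {x | ∃ μ ∈ S, x * x + b μ * x + c μ = 0}.ncard ≤ 2 * S.ncard := by
  have hfin : (S ×ˢ ({1, -1} : Set ℝ)).Finite := hS.prod (Set.toFinite _)
  calc _ ≤ _ := Set.ncard_le_ncard (setOf_exists_quadratic_eq_zero_subset_image S b c)
        (hfin.image _)
    _ ≤ (S ×ˢ ({1, -1} : Set ℝ)).ncard := Set.ncard_image_le hfin
    _ = 2 * S.ncard := by rw [Set.ncard_prod, Set.ncard_pair (by norm_num), mul_comm]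

section Corona

variable {n₁ : ℕ} {V : Type*} [Fintype V] [DecidableEq V]
  (A₁ : Matrix (Fin n₁) (Fin n₁) ℝ) (A₂ : Matrix V V ℝ)

theorem coronaAdj_mulVec_inl (x : Fin n₁ → ℝ) (y : V × Fin n₁ → ℝ) (i : Fin n₁) :
    (coronaAdj A₁ A₂ *ᵥ Sum.elim x y) (Sum.inl i) = (A₁ *ᵥ (x + ∑ k, fun j => y (k, j))) i := by
  simp only [mulVec, dotProduct, coronaAdj, Fintype.sum_sum_type, fromBlocks_apply₁₁, Sum.elim_inl,
    fromBlocks_apply₁₂, of_apply, Sum.elim_inr, Fintype.sum_prod_type, Pi.add_apply,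
    Finset.sum_apply, mul_add, Finset.mul_sum, Finset.sum_add_distrib, add_right_inj]
  exact Finset.sum_comm

theorem coronaAdj_mulVec_inr (x : Fin n₁ → ℝ) (y : V × Fin n₁ → ℝ) (k : V) (i : Fin n₁) :
    (coronaAdj A₁ A₂ *ᵥ Sum.elim x y) (Sum.inr (k, i)) =
      (A₁ *ᵥ x) i + (A₂ *ᵥ fun l => y (l, i)) k := by
  simp [coronaAdj, mulVec, dotProduct, Fintype.sum_prod_type, one_apply]

variable {A₁ A₂}

theorem mem_spectrum_of_coronaAdj_mulVec_eq_smul_inr {a : ℝ} {y : V × Fin n₁ → ℝ} (hy : y ≠ 0)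
    (h : coronaAdj A₁ A₂ *ᵥ Sum.elim (0 : Fin n₁ → ℝ) y = a • Sum.elim (0 : Fin n₁ → ℝ) y) :
    a ∈ spectrum ℝ A₂ := by
  obtain ⟨⟨k₀, i₀⟩, hy₀⟩ := Function.ne_iff.mp hy
  refine (mem_spectrum_iff_exists_mulVec_eq_smul A₂ a).mpr
    ⟨fun l => y (l, i₀), fun h₀ => hy₀ (congrFun h₀ k₀), funext fun k => ?_⟩
  simpa [coronaAdj_mulVec_inr] using congrFun h (Sum.inr (k, i₀))

theorem aeval_mulVec_eq_zero_of_coronaAdj_mulVec_eq_smul {r : ℝ} (hA₂ : ∀ j, ∑ i, A₂ i j = r)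
    {a : ℝ} {x : Fin n₁ → ℝ} {y : V × Fin n₁ → ℝ}
    (h : coronaAdj A₁ A₂ *ᵥ Sum.elim x y = a • Sum.elim x y) :
    aeval A₁ (C (Fintype.card V : ℝ) * X ^ 2 + C (a - r) * X - C (a * (a - r))) *ᵥ x = 0 := by
  set s : Fin n₁ → ℝ := ∑ k, fun j => y (k, j)
  have h_inl : A₁ *ᵥ s = a • x - A₁ *ᵥ x := by
    refine eq_sub_of_add_eq' (funext fun i => ?_)
    simpa [coronaAdj_mulVec_inl, mulVec_add] using congrFun h (Sum.inl i)
  have h_inr (k : V) (i : Fin n₁) : (A₁ *ᵥ x) i + (A₂ *ᵥ fun l => y (l, i)) k = a * y (k, i) := by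
    simpa [coronaAdj_mulVec_inr] using congrFun h (Sum.inr (k, i))
  have h_sum : (a - r) • s = (Fintype.card V : ℝ) • (A₁ *ᵥ x) := funext fun i => by
    have := Finset.sum_congr rfl fun k (_ : k ∈ Finset.univ) => h_inr k i
    rw [Finset.sum_add_distrib, Finset.sum_const, Finset.card_univ, nsmul_eq_mul,
      sum_mulVec_of_sum_col_eq hA₂, ← Finset.mul_sum] at this
    simp only [Pi.smul_apply, smul_eq_mul, s, Finset.sum_apply]
    linear_combination -this
  have h_sq : (Fintype.card V : ℝ) • (A₁ *ᵥ (A₁ *ᵥ x)) = (a - r) • (a • x - A₁ *ᵥ x) := by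
    rw [← mulVec_smul, ← h_sum, mulVec_smul, h_inl]
  simp only [map_sub, map_add, map_mul, aeval_C, aeval_X, Algebra.algebraMap_eq_smul_one,
    sub_mulVec, add_mulVec, smul_mul, smul_mulVec, one_mul, pow_two, ← mulVec_mulVec, one_mulVec]
  rw [h_sq]
  module

theorem spectrum_coronaAdj_subset (hA₁ : A₁.IsHermitian) {r : ℝ} (hA₂ : ∀ j, ∑ i, A₂ i j = r) :
    spectrum ℝ (coronaAdj A₁ A₂) ⊆ spectrum ℝ A₂ ∪
      {a | ∃ μ ∈ spectrum ℝ A₁, a * a + -(μ + r) * a + (μ * r - Fintype.card V * μ ^ 2) = 0} := by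
  intro a ha
  obtain ⟨v, hv, h⟩ := (mem_spectrum_iff_exists_mulVec_eq_smul _ a).mp ha
  rw [← Sum.elim_comp_inl_inr v] at hv h
  by_cases hx : v ∘ Sum.inl = 0
  · rw [hx] at hv h
    exact Or.inl (mem_spectrum_of_coronaAdj_mulVec_eq_smul_inr (fun hy => hv (by simp [hy])) h)
  · have h_ker := aeval_mulVec_eq_zero_of_coronaAdj_mulVec_eq_smul hA₂ h
    have h_sing : ¬IsUnit (aeval A₁ (C (Fintype.card V : ℝ) * X ^ 2 + C (a - r) * X -
        C (a * (a - r)))) := fun hu =>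
      hx (mulVec_injective_iff_isUnit.mpr hu (h_ker.trans (mulVec_zero _).symm))
    obtain ⟨μ, hμ, hq⟩ := hA₁.exists_mem_spectrum_eval_eq_zero _ h_sing
    simp only [eval_sub, eval_add, eval_mul, eval_C, eval_X, eval_pow] at hq
    exact Or.inr ⟨μ, hμ, by linear_combination -hq⟩

end Corona

/-- If the signed graph `S₁` has exactly `t₁` distinct (real) eigenvalues and the net regular
signed graph `S₂` has exactly `t₂` distinct eigenvalues, then the adjacency matrix of
`S₁ ⋆ₛ S₂` has at most `2t₁ + t₂` distinct eigenvalues. -/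
theorem corona_adj_card_spectrum {n₁ n₂ t₁ t₂ : ℕ}
    (A₁ : Matrix (Fin n₁) (Fin n₁) ℝ) (A₂ : Matrix (Fin n₂) (Fin n₂) ℝ)
    (h₁ : IsSignedAdj A₁) (h₂ : IsSignedAdj A₂)
    (r₂ : ℝ) (hreg : ∀ i, ∑ j, A₂ i j = r₂)
    (ht₁ : (spectrum ℝ A₁).ncard = t₁) (ht₂ : (spectrum ℝ A₂).ncard = t₂) :
    (spectrum ℝ (coronaAdj A₁ A₂)).ncard ≤ 2 * t₁ + t₂ := by
  have hcol (j : Fin n₂) : ∑ i, A₂ i j = r₂ := by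
    rw [← hreg j]
    exact Finset.sum_congr rfl fun i _ => by simpa using h₂.1.apply j i
  set Q := {a | ∃ μ ∈ spectrum ℝ A₁,
    a * a + -(μ + r₂) * a + (μ * r₂ - Fintype.card (Fin n₂) * μ ^ 2) = 0}
  have hQ_fin : Q.Finite := (finite_spectrum A₁).setOf_exists_quadratic_eq_zero _ _
  calc (spectrum ℝ (coronaAdj A₁ A₂)).ncard
      ≤ (spectrum ℝ A₂ ∪ Q).ncard :=
        Set.ncard_le_ncard (spectrum_coronaAdj_subset h₁.1 hcol)
          ((finite_spectrum A₂).union hQ_fin)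
    _ ≤ (spectrum ℝ A₂).ncard + Q.ncard := Set.ncard_union_le _ _
    _ ≤ t₂ + 2 * t₁ := by
        rw [← ht₁, ← ht₂]
        gcongr
        exact (finite_spectrum A₁).ncard_setOf_exists_quadratic_eq_zero_le _ _
    _ = 2 * t₁ + t₂ := add_comm _ _
end

section
/- Let S be a signed graph on n ≥ 2 vertices whose adjacency matrix A₀ (a real symmetric matrix with zero diagonal and entries in {-1,0,1}) has exactly two distinct eigenvalues. Let A be the adjacency matrix of the s-neighbourhood corona S ⋆ₛ K₁, where K₁ is the one-vertex signed graph with adjacency matrix the 1×1 zero matrix. Then A has exactly four distinct eigenvalues. -/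
open Matrix BigOperators Kronecker

/-!
Reindexed, the corona `S ⋆ₛ K₁` has adjacency matrix `[[A, A], [A, 0]] = [[1, 1], [1, 0]] ⊗ A`.
The columns of `[[φ, ψ], [1, 1]]` are eigenvectors of `[[1, 1], [1, 0]]` (golden ratio `φ` and its
conjugate `ψ`), so conjugating by `[[φ, ψ], [1, 1]] ⊗ I` makes the corona block diagonal with
blocks `φ A` and `ψ A`; its spectrum is `φ • {x, y} ∪ ψ • {x, y}` where `{x, y}` is the spectrum
of `A`. As `A` is symmetric with trace `0`, the multiplicities give `a x + b y = 0` with `a, b > 0`,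
so `x, y ≠ 0`, and a coincidence `φ x = ψ y` or `φ y = ψ x` would make `φ` rational.
-/

open scoped goldenRatio Pointwise

theorem Matrix.spectrum_fromBlocks_zero₁₂ {K m n : Type*} [Field K] [Fintype m] [DecidableEq m]
    [Fintype n] [DecidableEq n] (A : Matrix m m K) (C : Matrix n m K) (D : Matrix n n K) :
    spectrum K (fromBlocks A 0 C D) = spectrum K A ∪ spectrum K D := by
  ext μ
  simp only [Set.mem_union, mem_spectrum_iff_isRoot_charpoly, charpoly_fromBlocks_zero₁₂,
    Polynomial.root_mul]

section

variable {m : Type*} [Fintype m] [DecidableEq m]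

theorem Matrix.fromBlocks_self_self_self_zero_mul (A : Matrix m m ℝ) :
    fromBlocks A A A 0 * fromBlocks (φ • 1) (ψ • 1) 1 1
      = fromBlocks (φ • 1) (ψ • 1) 1 1 * fromBlocks (φ • A) 0 0 (ψ • A) := by
  simp only [fromBlocks_multiply, Matrix.mul_smul, Matrix.smul_mul, Matrix.mul_one,
    Matrix.one_mul, Matrix.mul_zero, add_zero, zero_add, smul_smul, ← sq,
    Real.goldenRatio_sq, Real.goldenConj_sq, add_smul, one_smul]

theorem Matrix.isUnit_fromBlocks_goldenRatio_goldenConj :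
    IsUnit (fromBlocks (φ • 1) (ψ • 1) 1 1 : Matrix (m ⊕ m) (m ⊕ m) ℝ) := by
  rw [isUnit_iff_isUnit_det, det_fromBlocks_one₂₂, Matrix.smul_mul, Matrix.one_mul, ← sub_smul,
    Real.goldenRatio_sub_goldenConj, det_smul, det_one, mul_one, isUnit_iff_ne_zero]
  positivity

theorem Matrix.spectrum_fromBlocks_self_self_self_zero (A : Matrix m m ℝ) :
    spectrum ℝ (fromBlocks A A A 0) = φ • spectrum ℝ A ∪ ψ • spectrum ℝ A := by
  obtain ⟨u, hu⟩ := isUnit_fromBlocks_goldenRatio_goldenConj (m := m)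
  have hconj : fromBlocks A A A 0
      = (u : Matrix (m ⊕ m) (m ⊕ m) ℝ) * fromBlocks (φ • A) 0 0 (ψ • A) * (↑u⁻¹ : Matrix _ _ ℝ) :=
    (Units.eq_mul_inv_iff_mul_eq u).mpr (hu ▸ fromBlocks_self_self_self_zero_mul A)
  have spectrum_smul {c : ℝ} (hc : c ≠ 0) : spectrum ℝ (c • A) = c • spectrum ℝ A :=
    spectrum.unit_smul_eq_smul A (Units.mk0 c hc)
  rw [hconj, spectrum.units_conjugate, spectrum_fromBlocks_zero₁₂,
    spectrum_smul Real.goldenRatio_ne_zero, spectrum_smul Real.goldenConj_ne_zero]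

end

theorem spectrum_coronaAdj_zero_fin_one {n : ℕ} (A : Matrix (Fin n) (Fin n) ℝ) :
    spectrum ℝ (coronaAdj A (0 : Matrix (Fin 1) (Fin 1) ℝ)) = spectrum ℝ (fromBlocks A A A 0) := by
  let e : Fin n ⊕ Fin 1 × Fin n ≃ Fin n ⊕ Fin n :=
    Equiv.sumCongr (Equiv.refl _) (Equiv.uniqueProd (Fin n) (Fin 1))
  have hreindex : coronaAdj A 0 = reindexAlgEquiv ℝ ℝ e.symm (fromBlocks A A A 0) := by
    ext (i | ⟨k, i⟩) (j | ⟨l, j⟩) <;> simp [coronaAdj, e, Fin.fin_one_eq_zero]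
  rw [hreindex, AlgEquiv.spectrum_eq]

theorem Matrix.IsHermitian.exists_pos_mul_add_pos_mul_eq_trace {m : Type*} [Fintype m]
    [DecidableEq m] {A : Matrix m m ℝ} (hA : A.IsHermitian) {x y : ℝ} (hxy : x ≠ y)
    (hspec : spectrum ℝ A = {x, y}) :
    ∃ a b : ℕ, 0 < a ∧ 0 < b ∧ a * x + b * y = A.trace := by
  have hrange : Set.range hA.eigenvalues = {x, y} := hA.spectrum_real_eq_range_eigenvalues ▸ hspec
  obtain ⟨i, hi⟩ : x ∈ Set.range hA.eigenvalues := hrange ▸ Set.mem_insert x {y}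
  obtain ⟨j, hj⟩ : y ∈ Set.range hA.eigenvalues := hrange ▸ Set.mem_insert_of_mem x rfl
  have heq_y {k : m} (hk : hA.eigenvalues k ≠ x) : hA.eigenvalues k = y := by
    have : hA.eigenvalues k ∈ ({x, y} : Set ℝ) := hrange ▸ Set.mem_range_self k
    simpa [hk] using this
  refine ⟨(Finset.univ.filter (hA.eigenvalues · = x)).card,
    (Finset.univ.filter (hA.eigenvalues · ≠ x)).card,
    Finset.card_pos.mpr ⟨i, by simp [hi]⟩, Finset.card_pos.mpr ⟨j, by simp [hj, hxy.symm]⟩, ?_⟩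
  rw [hA.trace_eq_sum_eigenvalues, ← Finset.sum_filter_add_sum_filter_not _ (hA.eigenvalues · = x)]
  simp only [RCLike.ofReal_real_eq_id, id_eq]
  rw [Finset.sum_congr rfl fun k hk => (Finset.mem_filter.mp hk).2,
    Finset.sum_congr rfl fun k hk => heq_y (Finset.mem_filter.mp hk).2,
    Finset.sum_const, Finset.sum_const, nsmul_eq_mul, nsmul_eq_mul]

theorem Real.goldenRatio_mul_ne_goldenConj_mul {a b : ℕ} (ha : 0 < a) {x y : ℝ} (hy : y ≠ 0)
    (h : a * x + b * y = 0) : φ * x ≠ ψ * y := by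
  intro hxy
  have hlin : (b * φ + a * ψ) * y = 0 := by linear_combination φ * h - a * hxy
  -- `ψ = 1 - φ` turns `b φ + a ψ = 0` into `(a - b) φ = a`, so `φ` would be rational.
  have hφ : ((a : ℝ) - b) * φ = a := by
    linear_combination -(mul_eq_zero.mp hlin).resolve_right hy + a * Real.goldenRatio_add_goldenConj
  have hab : (a : ℝ) - b ≠ 0 := fun h0 => by
    rw [h0, zero_mul] at hφ
    exact ha.ne' (by exact_mod_cast hφ.symm)
  refine Real.goldenRatio_irrational ⟨a / (a - b), ?_⟩
  push_cast
  rw [div_eq_iff hab]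
  linear_combination -hφ

theorem ncard_goldenRatio_smul_union_goldenConj_smul_pair {a b : ℕ} (ha : 0 < a) (hb : 0 < b)
    {x y : ℝ} (hxy : x ≠ y) (h : a * x + b * y = 0) :
    (φ • {x, y} ∪ ψ • {x, y} : Set ℝ).ncard = 4 := by
  have hx : x ≠ 0 := by
    rintro rfl
    have : (b : ℝ) * y = 0 := by simpa using h
    exact hxy ((mul_eq_zero.mp this).resolve_left (by positivity)).symm
  have hy : y ≠ 0 := by
    rintro rfl
    have : (a : ℝ) * x = 0 := by simpa using h
    exact hxy ((mul_eq_zero.mp this).resolve_left (by positivity))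
  have hφψ : φ ≠ ψ := (Real.goldenConj_neg.trans Real.goldenRatio_pos).ne'
  rw [Set.smul_set_insert, Set.smul_set_insert, Set.smul_set_singleton, Set.smul_set_singleton,
    Set.insert_union, Set.singleton_union, Set.ncard_insert_of_notMem, Set.ncard_insert_of_notMem,
    Set.ncard_pair]
  all_goals simp only [smul_eq_mul, Set.mem_insert_iff, Set.mem_singleton_iff, not_or]
  · exact (mul_left_cancel₀ Real.goldenConj_ne_zero).mt hxy
  · exact ⟨Real.goldenRatio_mul_ne_goldenConj_mul (b := a) hb hx (by linear_combination h),
      fun h' => hφψ (mul_right_cancel₀ hy h')⟩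
  · exact ⟨(mul_left_cancel₀ Real.goldenRatio_ne_zero).mt hxy,
      fun h' => hφψ (mul_right_cancel₀ hx h'), Real.goldenRatio_mul_ne_goldenConj_mul ha hy h⟩

theorem corona_adj_K1_four_eigenvalues_general {n : ℕ}
    (A₀ : Matrix (Fin n) (Fin n) ℝ) (h₀ : IsSignedAdj A₀)
    (h2 : (spectrum ℝ A₀).ncard = 2) :
    (spectrum ℝ (coronaAdj A₀ (0 : Matrix (Fin 1) (Fin 1) ℝ))).ncard = 4 := by
  obtain ⟨hA, hdiag, -⟩ := h₀
  obtain ⟨x, y, hxy, hspec⟩ := Set.ncard_eq_two.mp h2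
  obtain ⟨a, b, ha, hb, htrace⟩ := hA.exists_pos_mul_add_pos_mul_eq_trace hxy hspec
  have htrace_zero : A₀.trace = 0 := by simp [Matrix.trace, hdiag]
  rw [spectrum_coronaAdj_zero_fin_one, spectrum_fromBlocks_self_self_self_zero, hspec]
  exact ncard_goldenRatio_smul_union_goldenConj_smul_pair ha hb hxy (htrace.trans htrace_zero)

/-- If a signed graph `S` on `n ≥ 2` vertices has exactly two distinct eigenvalues, then the
adjacency matrix of `S ⋆ₛ K₁` (where `K₁` is the one-vertex signed graph, with adjacency
matrix the `1 × 1` zero matrix) has exactly four distinct eigenvalues. -/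
theorem corona_adj_K1_four_eigenvalues {n : ℕ}
    (A₀ : Matrix (Fin n) (Fin n) ℝ) (h₀ : IsSignedAdj A₀) (hn : 2 ≤ n)
    (h2 : (spectrum ℝ A₀).ncard = 2) :
    (spectrum ℝ (coronaAdj A₀ (0 : Matrix (Fin 1) (Fin 1) ℝ))).ncard = 4 :=
  corona_adj_K1_four_eigenvalues_general A₀ h₀ h2
end

section
/- Let S₁ and S₂ be signed graphs on the same number n of vertices whose adjacency matrices A₁ and A₂ are cospectral, i.e. have equal characteristic polynomials, and let S be any signed graph with adjacency matrix B (m×m). Then the adjacency matrices of the s-neighbourhood coronas S₁ ⋆ₛ S and S₂ ⋆ₛ S are also cospectral, i.e. have equal characteristic polynomials. -/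
open Matrix BigOperators Kronecker

/-!
Cospectral real symmetric matrices are similar: both are orthogonally similar to the same
diagonal matrix, that of their sorted eigenvalues, which the characteristic polynomial determines. A similarity
`A ↦ U A U⁻¹` lifts to the corona: conjugating by `diag(U, I ⊗ U)` carries the corona of `A` to the
corona of `U A U⁻¹`, because `U` acts on each of the copies of the vertex set of `A` and commutes
with `B ⊗ I`. Hence the characteristic polynomial of the corona depends only on the similarity
class of `A`.
-/

namespace Matrix

theorem IsHermitian.exists_units_conj_eq_of_charpoly_eq {𝕜 n : Type*} [RCLike 𝕜] [Fintype n]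
    [DecidableEq n] {A B : Matrix n n 𝕜} (hA : A.IsHermitian) (hB : B.IsHermitian)
    (h : A.charpoly = B.charpoly) : ∃ U : (Matrix n n 𝕜)ˣ, B = U * A * U⁻¹ := by
  have hdiag := hA.conjStarAlgAut_star_eigenvectorUnitary
  rw [(hA.eigenvalues_eq_eigenvalues_iff hB).mpr h] at hdiag
  set u := hB.eigenvectorUnitary * star hA.eigenvectorUnitary
  refine ⟨Unitary.toUnits u, ?_⟩
  calc B = Unitary.conjStarAlgAut 𝕜 _ hB.eigenvectorUnitary
          (diagonal (RCLike.ofReal ∘ hB.eigenvalues)) := hB.spectral_theorem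
    _ = Unitary.conjStarAlgAut 𝕜 _ u A := by rw [← hdiag, Unitary.conjStarAlgAut_mul_apply]
    _ = _ := by simp [← Unitary.coe_star]

section Kronecker

variable {R l m n : Type*} [CommSemiring R] [Fintype l] [DecidableEq l] [Fintype m]

-- The ascriptions on `submatrix` keep `*` from elaborating with the `CStarMatrix` instance.
theorem submatrix_snd_mul_one_kronecker (M : Matrix n m R) (N : Matrix m m R) :
    (M.submatrix id Prod.snd : Matrix n (l × m) R) * ((1 : Matrix l l R) ⊗ₖ N) =
      (M * N).submatrix id Prod.snd := by
  ext i ⟨v, j⟩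
  simp [mul_apply, Fintype.sum_prod_type, one_apply]

theorem one_kronecker_mul_submatrix_snd (M : Matrix m n R) (N : Matrix m m R) :
    ((1 : Matrix l l R) ⊗ₖ N) * (M.submatrix Prod.snd id : Matrix (l × m) n R) =
      (N * M).submatrix Prod.snd id := by
  ext ⟨v, j⟩ i
  simp [mul_apply, Fintype.sum_prod_type, one_apply]

variable (l) in
def fromBlocksOneKroneckerHom [DecidableEq m] :
    Matrix m m R →* Matrix (m ⊕ l × m) (m ⊕ l × m) R where
  toFun U := fromBlocks U 0 0 ((1 : Matrix l l R) ⊗ₖ U)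
  map_one' := by simp
  map_mul' U W := by simp [fromBlocks_multiply, ← mul_kronecker_mul]

end Kronecker

end Matrix

section Corona

variable {n : ℕ} {V : Type*} [DecidableEq V]

theorem coronaAdj_eq_fromBlocks (A : Matrix (Fin n) (Fin n) ℝ) (B : Matrix V V ℝ) :
    coronaAdj A B = fromBlocks A (A.submatrix id Prod.snd) (A.submatrix Prod.snd id) (B ⊗ₖ 1) :=
  rfl

variable [Fintype V]

theorem coronaAdj_mul_fromBlocksOneKroneckerHom {A A' U : Matrix (Fin n) (Fin n) ℝ}
    (h : A' * U = U * A) (B : Matrix V V ℝ) :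
    coronaAdj A' B * fromBlocksOneKroneckerHom V U =
      fromBlocksOneKroneckerHom V U * coronaAdj A B := by
  simp only [coronaAdj_eq_fromBlocks, fromBlocksOneKroneckerHom, MonoidHom.coe_mk, OneHom.coe_mk,
    fromBlocks_multiply, submatrix_snd_mul_one_kronecker, one_kronecker_mul_submatrix_snd,
    ← mul_kronecker_mul, Matrix.mul_zero, Matrix.zero_mul, add_zero, zero_add, Matrix.mul_one,
    Matrix.one_mul, h]
  rw [fromBlocks_inj]
  refine ⟨rfl, submatrix_mul U A id id Prod.snd Function.bijective_id, ?_, rfl⟩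
  rw [← h]
  exact (submatrix_mul A' U Prod.snd id id Function.bijective_id).symm

theorem charpoly_coronaAdj_units_conj (U : (Matrix (Fin n) (Fin n) ℝ)ˣ)
    (A : Matrix (Fin n) (Fin n) ℝ) (B : Matrix V V ℝ) :
    (coronaAdj (U * A * U⁻¹ : Matrix (Fin n) (Fin n) ℝ) B).charpoly = (coronaAdj A B).charpoly := by
  let W := Units.map (fromBlocksOneKroneckerHom V) U
  have hconj : coronaAdj (U * A * U⁻¹ : Matrix (Fin n) (Fin n) ℝ) B = W * coronaAdj A B * W⁻¹ :=
    (Units.eq_mul_inv_iff_mul_eq W).mpr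
      (coronaAdj_mul_fromBlocksOneKroneckerHom (by simp [mul_assoc]) B)
  rw [hconj, coe_units_inv, charpoly_units_conj]

end Corona

theorem corona_adj_cospectral_general {n m : ℕ}
    (A₁ A₂ : Matrix (Fin n) (Fin n) ℝ) (B : Matrix (Fin m) (Fin m) ℝ)
    (h₁ : IsSignedAdj A₁) (h₂ : IsSignedAdj A₂)
    (hcosp : A₁.charpoly = A₂.charpoly) :
    (coronaAdj A₁ B).charpoly = (coronaAdj A₂ B).charpoly := by
  obtain ⟨U, rfl⟩ := h₁.1.exists_units_conj_eq_of_charpoly_eq h₂.1 hcosp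
  exact (charpoly_coronaAdj_units_conj U A₁ B).symm

/-- If the signed graphs `S₁` and `S₂` (on the same number `n` of vertices) are adjacency
cospectral, then for any signed graph `S`, the s-neighbourhood coronas `S₁ ⋆ₛ S` and
`S₂ ⋆ₛ S` are adjacency cospectral, i.e. their adjacency matrices have equal characteristic
polynomials. -/
theorem corona_adj_cospectral {n m : ℕ}
    (A₁ A₂ : Matrix (Fin n) (Fin n) ℝ) (B : Matrix (Fin m) (Fin m) ℝ)
    (h₁ : IsSignedAdj A₁) (h₂ : IsSignedAdj A₂) (hB : IsSignedAdj B)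
    (hcosp : A₁.charpoly = A₂.charpoly) :
    (coronaAdj A₁ B).charpoly = (coronaAdj A₂ B).charpoly :=
  corona_adj_cospectral_general A₁ A₂ B h₁ h₂ hcosp
end
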